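/- arXiv:2307.16191 — 11 statements merged into one kernel-verified Lean document; each statement's English description precedes it below -/
import Mathlib

section
/- If (λ,ρ) and (λ',ρ') both belong to Λ* and λ − ρ = λ' − ρ' as elements of ℤ^n, then (λ,ρ) = (λ',ρ'). -/
/-!
Along a fixed difference `λ - ρ`, the conditions defining `Λ` only improve when both `λ` and `ρ`
are lowered: the weighted sum is unchanged, and `|λ + ρ|` drops by an even amount, so its parity
is kept and the bound `200N + 1` still holds. Hence the componentwise minimum of two pairs with
the same difference lies in `Λ` below both of them, and minimality forces both to equal it.
-/

/-- The resonance set `Λ` of the paper: pairs `(λ, ρ)` of multi-indices in `ℕ^n`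
with `|λ+ρ|` odd, `|λ+ρ| ≤ 200N+1`, and `∑ ω_j (λ_j - ρ_j) > m`. -/
def resonanceSet (n : ℕ) (m : ℝ) (ω : Fin n → ℝ) (N : ℕ) :
    Set ((Fin n → ℕ) × (Fin n → ℕ)) :=
  {p | Odd (∑ i, (p.1 i + p.2 i)) ∧ (∑ i, (p.1 i + p.2 i)) ≤ 200 * N + 1 ∧
    m < ∑ i, ω i * ((p.1 i : ℝ) - (p.2 i : ℝ))}

/-- The set `Λ*` of minimal elements of `Λ` with respect to the componentwise order. -/
def resonanceSetMin (n : ℕ) (m : ℝ) (ω : Fin n → ℝ) (N : ℕ) :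
    Set ((Fin n → ℕ) × (Fin n → ℕ)) :=
  {p ∈ resonanceSet n m ω N | ∀ q ∈ resonanceSet n m ω N,
    (∀ i, q.1 i ≤ p.1 i) → (∀ i, q.2 i ≤ p.2 i) → q = p}

open Finset

variable {n : ℕ} {m : ℝ} {ω : Fin n → ℝ} {N : ℕ}

theorem mem_resonanceSet_of_snd_le_of_sub_eq {p q : (Fin n → ℕ) × (Fin n → ℕ)}
    (hp : p ∈ resonanceSet n m ω N) (hq : q.2 ≤ p.2)
    (hsub : ∀ i, (q.1 i : ℤ) - q.2 i = p.1 i - p.2 i) : q ∈ resonanceSet n m ω N := by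
  have hlen_i : ∀ i, p.1 i + p.2 i = q.1 i + q.2 i + 2 * (p.2 i - q.2 i) := fun i => by
    have hle : q.2 i ≤ p.2 i := hq i; have := hsub i; omega
  have hlen : ∑ i, (p.1 i + p.2 i) = ∑ i, (q.1 i + q.2 i) + 2 * ∑ i, (p.2 i - q.2 i) := by
    simp only [hlen_i, sum_add_distrib, mul_sum]
  have hweight : ∀ i, (q.1 i : ℝ) - q.2 i = p.1 i - p.2 i := fun i => by exact_mod_cast hsub i
  obtain ⟨hodd, hle, hgt⟩ := hp
  rw [hlen] at hodd hle
  refine ⟨?_, by omega, ?_⟩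
  · simpa [Nat.odd_add, even_two_mul] using hodd
  · simpa only [hweight] using hgt

theorem inf_mem_resonanceSet {p p' : (Fin n → ℕ) × (Fin n → ℕ)}
    (hp : p ∈ resonanceSet n m ω N)
    (hsub : ∀ i, (p.1 i : ℤ) - p.2 i = p'.1 i - p'.2 i) : p ⊓ p' ∈ resonanceSet n m ω N :=
  mem_resonanceSet_of_snd_le_of_sub_eq hp inf_le_left fun i => by
    have := hsub i
    simp only [Prod.fst_inf, Prod.snd_inf, Pi.inf_apply]
    omega

theorem eq_of_mem_resonanceSetMin_of_le {p q : (Fin n → ℕ) × (Fin n → ℕ)}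
    (hp : p ∈ resonanceSetMin n m ω N) (hq : q ∈ resonanceSet n m ω N) (hqp : q ≤ p) : q = p :=
  hp.2 q hq hqp.1 hqp.2

theorem resonanceSetMin_eq_of_sub_eq_general
    (n : ℕ) (m : ℝ) (N : ℕ)
    (ω : Fin n → ℝ)
    (lam rho lam' rho' : Fin n → ℕ)
    (hmem : (lam, rho) ∈ resonanceSetMin n m ω N)
    (hmem' : (lam', rho') ∈ resonanceSetMin n m ω N)
    (hdiff : ∀ i, (lam i : ℤ) - (rho i : ℤ) = (lam' i : ℤ) - (rho' i : ℤ)) :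
    lam = lam' ∧ rho = rho' := by
  have hinf := inf_mem_resonanceSet (p' := (lam', rho')) hmem.1 hdiff
  have h : (lam, rho) = (lam', rho') :=
    (eq_of_mem_resonanceSetMin_of_le hmem hinf inf_le_left).symm.trans
      (eq_of_mem_resonanceSetMin_of_le hmem' hinf inf_le_right)
  exact Prod.ext_iff.mp h

/-- two elements of `Λ*` with the same difference `λ - ρ` coincide. -/
theorem resonanceSetMin_eq_of_sub_eq
    (n : ℕ) (hn : 0 < n) (m : ℝ) (hm : 0 < m) (N : ℕ) (hN : 1 ≤ N)
    (ω : Fin n → ℝ) (hωm : ∀ i, ω i < m) (hωpos : ∀ i, 0 < ω i)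
    (hωanti : StrictAnti ω)
    (lam rho lam' rho' : Fin n → ℕ)
    (hmem : (lam, rho) ∈ resonanceSetMin n m ω N)
    (hmem' : (lam', rho') ∈ resonanceSetMin n m ω N)
    (hdiff : ∀ i, (lam i : ℤ) - (rho i : ℤ) = (lam' i : ℤ) - (rho' i : ℤ)) :
    lam = lam' ∧ rho = rho' :=
  resonanceSetMin_eq_of_sub_eq_general n m N ω lam rho lam' rho' hmem hmem' hdiff
end

section
/- For every (λ,ρ) ∈ Λ*, the total ∑_{j=1}^n ρ_j equals 0 or 1. -/
/-!
If `∑ ρ_j ≥ 2`, remove two units from `ρ`. This keeps `|λ+ρ|` odd, lowers it, and can only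
increase `∑ ω_j (λ_j - ρ_j)` because the frequencies are positive; so a strictly smaller
element of `Λ` exists, contradicting minimality.
-/

open Finset

lemma exists_le_sum_add_one_eq {ι : Type*} [Fintype ι] (f : ι → ℕ) (h : ∑ i, f i ≠ 0) :
    ∃ g ≤ f, ∑ i, g i + 1 = ∑ i, f i := by
  classical
  obtain ⟨i, -, hi⟩ := exists_ne_zero_of_sum_ne_zero h
  have hsingle : Pi.single i 1 ≤ f := by
    intro j
    rcases eq_or_ne j i with rfl | hj
    · simpa using Nat.one_le_iff_ne_zero.mpr hi
    · simp [Pi.single_eq_of_ne hj]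
  refine ⟨f - Pi.single i 1, tsub_le_self, ?_⟩
  conv_rhs => rw [← tsub_add_cancel_of_le hsingle]
  simp [sum_add_distrib]

lemma exists_le_sum_add_eq {ι : Type*} [Fintype ι] (f : ι → ℕ) {k : ℕ} (hk : k ≤ ∑ i, f i) :
    ∃ g ≤ f, ∑ i, g i + k = ∑ i, f i := by
  induction k with
  | zero => exact ⟨f, le_rfl, rfl⟩
  | succ k ih =>
    obtain ⟨g, hgf, hg⟩ := ih (by omega)
    obtain ⟨g', hg'g, hg'⟩ := exists_le_sum_add_one_eq g (by omega)
    exact ⟨g', hg'g.trans hgf, by omega⟩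

lemma mem_resonanceSet_of_sub_even {n : ℕ} {m : ℝ} {ω : Fin n → ℝ} {N : ℕ}
    (hω : ∀ i, 0 ≤ ω i) {lam rho rho' : Fin n → ℕ} (hmem : (lam, rho) ∈ resonanceSet n m ω N)
    (hle : rho' ≤ rho) {k : ℕ} (hsum : ∑ i, rho' i + 2 * k = ∑ i, rho i) :
    (lam, rho') ∈ resonanceSet n m ω N := by
  obtain ⟨hodd, htot, hres⟩ := hmem
  have htotal : ∑ i, (lam i + rho' i) + 2 * k = ∑ i, (lam i + rho i) := by
    simp only [sum_add_distrib]
    omega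
  refine ⟨?_, by dsimp only at htot ⊢; omega, ?_⟩
  · rw [← htotal] at hodd
    exact (Nat.odd_add.mp hodd).mpr (even_two_mul k)
  · refine hres.trans_le (sum_le_sum fun i _ => ?_)
    have hrho : (rho' i : ℝ) ≤ rho i := by exact_mod_cast hle i
    exact mul_le_mul_of_nonneg_left (by linarith) (hω i)

theorem resonanceSetMin_sum_rho_le_one_general
    (n : ℕ) (m : ℝ) (N : ℕ)
    (ω : Fin n → ℝ) (hωpos : ∀ i, 0 < ω i)
    (lam rho : Fin n → ℕ)
    (hmem : (lam, rho) ∈ resonanceSetMin n m ω N) :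
    (∑ j, rho j) = 0 ∨ (∑ j, rho j) = 1 := by
  by_contra! h
  obtain ⟨hres, hmin⟩ := hmem
  obtain ⟨rho', hle, hsum⟩ := exists_le_sum_add_eq rho (k := 2) (by omega)
  have hres' : (lam, rho') ∈ resonanceSet n m ω N :=
    mem_resonanceSet_of_sub_even (fun i => (hωpos i).le) hres hle (k := 1) hsum
  have hrho : rho' = rho := congrArg Prod.snd (hmin _ hres' (fun _ => le_rfl) hle)
  subst hrho
  omega

/-- for every `(λ,ρ) ∈ Λ*`, the total `∑ ρ_j` equals `0` or `1`. -/
theorem resonanceSetMin_sum_rho_le_one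
    (n : ℕ) (hn : 0 < n) (m : ℝ) (hm : 0 < m) (N : ℕ) (hN : 1 ≤ N)
    (ω : Fin n → ℝ) (hωm : ∀ i, ω i < m) (hωpos : ∀ i, 0 < ω i)
    (hωanti : StrictAnti ω)
    (lam rho : Fin n → ℕ)
    (hmem : (lam, rho) ∈ resonanceSetMin n m ω N) :
    (∑ j, rho j) = 0 ∨ (∑ j, rho j) = 1 :=
  resonanceSetMin_sum_rho_le_one_general n m N ω hωpos lam rho hmem
end

section
/- If (λ,ρ) ∈ Λ* and ∑_{j=1}^n ρ_j = 1, then there exists an index j with 2 ≤ j ≤ n such that ρ = e_j and λ_k = 0 for every k ≥ j. -/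
lemma Fintype.exists_eq_piSingle_of_sum_eq_one {ι : Type*} [Fintype ι] [DecidableEq ι]
    {f : ι → ℕ} (h : ∑ i, f i = 1) : ∃ j, f = Pi.single j 1 := by
  obtain ⟨j, hj⟩ := (Finsupp.equivFunOnFinite.symm f).sum_eq_one_iff.mp (by
    rwa [Finsupp.sum_fintype _ _ (fun _ => rfl)])
  exact ⟨j, by simpa [Finsupp.single_eq_pi_single] using congrArg (⇑) hj⟩

section

variable {n : ℕ} {m : ℝ} {ω : Fin n → ℝ} {N : ℕ}

lemma resonanceSet.weight_add_single_sub_single (q : Fin n → ℕ) (j k : Fin n) :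
    ∑ i, ω i * (((q + Pi.single k 1 : Fin n → ℕ) i : ℝ) - ((Pi.single j 1 : Fin n → ℕ) i : ℝ)) =
      ∑ i, ω i * (q i : ℝ) + ω k - ω j := by
  simp [mul_sub, mul_add, Finset.sum_add_distrib, Finset.sum_sub_distrib, Pi.single_apply]

lemma resonanceSet.fst_ne_zero (hm : 0 ≤ m) (hω : ∀ i, 0 ≤ ω i) {lam rho : Fin n → ℕ}
    (h : (lam, rho) ∈ resonanceSet n m ω N) : lam ≠ 0 := by
  rintro rfl
  have hweight : ∑ i, ω i * (((0 : Fin n → ℕ) i : ℝ) - rho i) ≤ 0 :=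
    Finset.sum_nonpos fun i _ => by simpa using mul_nonneg (hω i) (Nat.cast_nonneg (rho i))
  exact absurd h.2.2 (by linarith)

lemma resonanceSet.mem_of_add_single {q : Fin n → ℕ} {j k : Fin n} (hωkj : ω k ≤ ω j)
    (h : (q + Pi.single k 1, Pi.single j 1) ∈ resonanceSet n m ω N) :
    (q, 0) ∈ resonanceSet n m ω N := by
  obtain ⟨hodd, hle, hweight⟩ := h
  have hdeg : ∑ i, ((q + Pi.single k 1 : Fin n → ℕ) i + (Pi.single j 1 : Fin n → ℕ) i) =
      ∑ i, q i + 2 := by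
    simp [Finset.sum_add_distrib, add_assoc]
  rw [hdeg] at hodd hle
  rw [resonanceSet.weight_add_single_sub_single] at hweight
  refine ⟨?_, ?_, ?_⟩
  · simpa using (Nat.odd_add.mp hodd).mpr even_two
  · simp only [Pi.zero_apply, add_zero]; omega
  · simp only [Pi.zero_apply, Nat.cast_zero, sub_zero]; linarith

lemma resonanceSetMin.omega_lt_of_fst_ne_zero {lam : Fin n → ℕ} {j k : Fin n}
    (h : (lam, Pi.single j 1) ∈ resonanceSetMin n m ω N) (hk : lam k ≠ 0) : ω j < ω k := by
  by_contra! hωkj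
  have hsplit : lam - Pi.single k 1 + Pi.single k 1 = lam := by
    refine tsub_add_cancel_of_le fun i => ?_
    rcases eq_or_ne i k with rfl | hik
    · simpa [Nat.one_le_iff_ne_zero] using hk
    · simp [hik]
  have hq := resonanceSet.mem_of_add_single hωkj (hsplit.symm ▸ h.1)
  have heq := h.2 _ hq (fun _ => tsub_le_self) (fun _ => Nat.zero_le _)
  simpa using congrFun (congrArg Prod.snd heq) j

end

theorem resonanceSetMin_rho_single_general
    (n : ℕ) (m : ℝ) (hm : 0 < m) (N : ℕ)
    (ω : Fin n → ℝ) (hωpos : ∀ i, 0 < ω i)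
    (hωanti : StrictAnti ω)
    (lam rho : Fin n → ℕ)
    (hmem : (lam, rho) ∈ resonanceSetMin n m ω N)
    (hsum : (∑ j, rho j) = 1) :
    ∃ j : Fin n, 1 ≤ (j : ℕ) ∧ (∀ i, rho i = if i = j then 1 else 0) ∧
      ∀ k, j ≤ k → lam k = 0 := by
  obtain ⟨j, rfl⟩ := Fintype.exists_eq_piSingle_of_sum_eq_one hsum
  have hsupport : ∀ k, lam k ≠ 0 → k < j := fun k hk => not_le.mp fun hjk =>
    (resonanceSetMin.omega_lt_of_fst_ne_zero hmem hk).not_ge (hωanti.antitone hjk)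
  obtain ⟨k, hk⟩ := Function.ne_iff.mp
    (resonanceSet.fst_ne_zero hm.le (fun i => (hωpos i).le) hmem.1)
  refine ⟨j, (Nat.zero_le k).trans_lt (hsupport k hk), fun i => Pi.single_apply j 1 i, ?_⟩
  exact fun k hjk => by_contra fun hk => (hsupport k hk).not_ge hjk

/-- if `(λ,ρ) ∈ Λ*` and `∑ ρ_j = 1`, then `ρ = e_j` for some index `j ≥ 2`
(in 0-based `Fin n` indexing: `1 ≤ j`), and `λ_k = 0` for every `k ≥ j`. -/
theorem resonanceSetMin_rho_single
    (n : ℕ) (hn : 0 < n) (m : ℝ) (hm : 0 < m) (N : ℕ) (hN : 1 ≤ N)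
    (ω : Fin n → ℝ) (hωm : ∀ i, ω i < m) (hωpos : ∀ i, 0 < ω i)
    (hωanti : StrictAnti ω)
    (lam rho : Fin n → ℕ)
    (hmem : (lam, rho) ∈ resonanceSetMin n m ω N)
    (hsum : (∑ j, rho j) = 1) :
    ∃ j : Fin n, 1 ≤ (j : ℕ) ∧ (∀ i, rho i = if i = j then 1 else 0) ∧
      ∀ k, j ≤ k → lam k = 0 :=
  resonanceSetMin_rho_single_general n m hm N ω hωpos hωanti lam rho hmem hsum
end

section
/- For every (λ,ρ) ∈ Λ* and every 1 ≤ j ≤ n one has the two-sided bound min(ω_n, m/(200N+1)) · ∑_{k ≤ j}(λ_k + ρ_k) ≤ ∑_{k ≤ j} ω_k (λ_k − ρ_k) ≤ ω_1 · ∑_{k ≤ j}(λ_k + ρ_k). -/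
/-!
A minimal `(λ, ρ) ∈ Λ` admits no nonzero `(a, b) ≤ (λ, ρ)` with `|a + b|` even and
`∑ ω a ≤ ∑ ω b`: removing it would leave an element of `Λ`. Removing `(e_i, e_k)` or
`(0, e_k + e_i)` shows that as soon as `ρ_k ≠ 0`, every `λ_i` and `ρ_i` with `i > k` vanishes.
Hence either `ρ` vanishes up to `j`, and the lower bound holds termwise since `ω_k ≥ ω_n`, or the
partial sums up to `j` are the full sums, and `∑ ω (λ - ρ) > m ≥ m / (200N + 1) · |λ + ρ|`.
The upper bound holds termwise.
-/

section Reals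

variable {ι : Type*} (s : Finset ι) (w x y : ι → ℝ) (c : ℝ)

lemma sum_mul_sub_le_mul_sum_add (hw : ∀ k ∈ s, 0 ≤ w k) (hwc : ∀ k ∈ s, w k ≤ c)
    (hx : ∀ k ∈ s, 0 ≤ x k) (hy : ∀ k ∈ s, 0 ≤ y k) :
    ∑ k ∈ s, w k * (x k - y k) ≤ c * ∑ k ∈ s, (x k + y k) := by
  rw [Finset.mul_sum]
  refine Finset.sum_le_sum fun k hk => ?_
  have := hw k hk; have := hwc k hk; have := hx k hk; have := hy k hk
  nlinarith

lemma mul_sum_add_le_sum_mul_sub (hy : ∀ k ∈ s, y k = 0) (hcw : ∀ k ∈ s, c ≤ w k)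
    (hx : ∀ k ∈ s, 0 ≤ x k) :
    c * ∑ k ∈ s, (x k + y k) ≤ ∑ k ∈ s, w k * (x k - y k) := by
  rw [Finset.mul_sum]
  refine Finset.sum_le_sum fun k hk => ?_
  rw [hy k hk, add_zero, sub_zero]
  exact mul_le_mul_of_nonneg_right (hcw k hk) (hx k hk)

end Reals

lemma sum_mul_cast_single {ι : Type*} [Fintype ι] [DecidableEq ι] (ω : ι → ℝ) (i : ι) :
    ∑ k, ω k * ((Pi.single i 1 : ι → ℕ) k : ℝ) = ω i := by
  simp [Pi.single_apply]

lemma single_one_le_of_ne_zero {ι : Type*} [DecidableEq ι] {f : ι → ℕ} {i : ι} (hi : f i ≠ 0)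
    (x : ι) : (Pi.single i 1 : ι → ℕ) x ≤ f x := by
  rcases eq_or_ne x i with rfl | hx
  · simpa [Nat.one_le_iff_ne_zero]
  · simp [hx]

namespace resonanceSet

variable {n : ℕ} {m : ℝ} {ω : Fin n → ℝ} {N : ℕ} {lam rho a b : Fin n → ℕ}

lemma tsub_mem (hmem : (lam, rho) ∈ resonanceSet n m ω N) (ha : ∀ i, a i ≤ lam i)
    (hb : ∀ i, b i ≤ rho i) (heven : Even (∑ i, (a i + b i)))
    (hweight : ∑ i, ω i * (a i : ℝ) ≤ ∑ i, ω i * (b i : ℝ)) :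
    (fun i => lam i - a i, fun i => rho i - b i) ∈ resonanceSet n m ω N := by
  obtain ⟨hodd, hbound, hsum⟩ := hmem
  simp only at hodd hbound hsum
  have hsplit :
      ∑ i, ((lam i - a i) + (rho i - b i)) + ∑ i, (a i + b i) = ∑ i, (lam i + rho i) := by
    rw [← Finset.sum_add_distrib]
    refine Finset.sum_congr rfl fun i _ => ?_
    have := ha i
    have := hb i
    omega
  have hweight_sub : ∑ i, ω i * (((lam i - a i : ℕ) : ℝ) - ((rho i - b i : ℕ) : ℝ)) =
      ∑ i, ω i * ((lam i : ℝ) - rho i) - (∑ i, ω i * (a i : ℝ) - ∑ i, ω i * (b i : ℝ)) := by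
    rw [← Finset.sum_sub_distrib, ← Finset.sum_sub_distrib]
    refine Finset.sum_congr rfl fun i _ => ?_
    rw [Nat.cast_sub (ha i), Nat.cast_sub (hb i)]
    ring
  refine ⟨(Nat.odd_add.mp (hsplit ▸ hodd)).mpr heven, by simp only; omega, ?_⟩
  simp only
  rw [hweight_sub]
  linarith

lemma mul_sum_le_weight (hm : 0 ≤ m) (hmem : (lam, rho) ∈ resonanceSet n m ω N) :
    m / (200 * N + 1) * ∑ i, ((lam i : ℝ) + rho i) ≤ ∑ i, ω i * ((lam i : ℝ) - rho i) := by
  obtain ⟨-, hbound, hsum⟩ := hmem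
  have hbound' : ∑ i, ((lam i : ℝ) + rho i) ≤ 200 * N + 1 := by exact_mod_cast hbound
  calc m / (200 * N + 1) * ∑ i, ((lam i : ℝ) + rho i)
      ≤ m / (200 * N + 1) * (200 * N + 1) := by gcongr
    _ = m := div_mul_cancel₀ m (by positivity)
    _ ≤ _ := hsum.le

end resonanceSet

namespace resonanceSetMin

variable {n : ℕ} {m : ℝ} {ω : Fin n → ℝ} {N : ℕ} {lam rho a b : Fin n → ℕ}

lemma eq_zero_of_removable (hmem : (lam, rho) ∈ resonanceSetMin n m ω N)
    (ha : ∀ i, a i ≤ lam i) (hb : ∀ i, b i ≤ rho i) (heven : Even (∑ i, (a i + b i)))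
    (hweight : ∑ i, ω i * (a i : ℝ) ≤ ∑ i, ω i * (b i : ℝ)) :
    a = 0 ∧ b = 0 := by
  have heq := hmem.2 _ (resonanceSet.tsub_mem hmem.1 ha hb heven hweight)
    (fun _ => Nat.sub_le _ _) (fun _ => Nat.sub_le _ _)
  simp only [Prod.mk.injEq, funext_iff] at heq
  refine ⟨funext fun i => ?_, funext fun i => ?_⟩
  · have := ha i; have := heq.1 i; simp only [Pi.zero_apply]; omega
  · have := hb i; have := heq.2 i; simp only [Pi.zero_apply]; omega

lemma lam_eq_zero_of_rho_ne_zero (hω : Antitone ω) (hmem : (lam, rho) ∈ resonanceSetMin n m ω N)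
    {k i : Fin n} (hk : rho k ≠ 0) (hki : k < i) : lam i = 0 := by
  by_contra hi
  have hsingle := congrFun (eq_zero_of_removable hmem (a := Pi.single i 1) (b := Pi.single k 1)
    (single_one_le_of_ne_zero hi) (single_one_le_of_ne_zero hk)
    (by simp [Finset.sum_add_distrib]) (by simpa only [sum_mul_cast_single] using hω hki.le)).1 i
  simp at hsingle

lemma rho_eq_zero_of_rho_ne_zero (hω : ∀ i, 0 ≤ ω i)
    (hmem : (lam, rho) ∈ resonanceSetMin n m ω N) {k i : Fin n} (hk : rho k ≠ 0) (hki : k ≠ i) :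
    rho i = 0 := by
  by_contra hi
  have hb : ∀ x, (Pi.single k 1 + Pi.single i 1 : Fin n → ℕ) x ≤ rho x := fun x => by
    rcases eq_or_ne x k with rfl | hxk
    · simpa [hki, Nat.one_le_iff_ne_zero] using hk
    · simpa [hxk] using single_one_le_of_ne_zero hi x
  have hpair := congrFun (eq_zero_of_removable hmem (a := 0) (b := Pi.single k 1 + Pi.single i 1)
    (fun _ => Nat.zero_le _) hb (by simp [Finset.sum_add_distrib])
    (by simpa [mul_add, Finset.sum_add_distrib, sum_mul_cast_single]
      using add_nonneg (hω k) (hω i))).2 i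
  simp [hki.symm] at hpair

lemma sum_Iic_eq_sum_univ (hω : Antitone ω) (hω₀ : ∀ i, 0 ≤ ω i)
    (hmem : (lam, rho) ∈ resonanceSetMin n m ω N) {k j : Fin n} (hk : rho k ≠ 0) (hkj : k ≤ j)
    (f : Fin n → ℕ → ℕ → ℝ) (hf : ∀ i, f i 0 0 = 0) :
    ∑ i ∈ Finset.Iic j, f i (lam i) (rho i) = ∑ i, f i (lam i) (rho i) := by
  refine Finset.sum_subset (Finset.subset_univ _) fun i _ hi => ?_
  have hki : k < i := hkj.trans_lt (by simpa using hi)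
  rw [lam_eq_zero_of_rho_ne_zero hω hmem hk hki, rho_eq_zero_of_rho_ne_zero hω₀ hmem hk hki.ne,
    hf]

end resonanceSetMin

/-- for `(λ,ρ) ∈ Λ*` and any `j`,
`min(ω_n, m/(200N+1)) ⬝ ∑_{k ≤ j}(λ_k+ρ_k) ≤ ∑_{k ≤ j} ω_k (λ_k-ρ_k)
  ≤ ω_1 ⬝ ∑_{k ≤ j}(λ_k+ρ_k)`. -/
theorem resonanceSetMin_partial_sum_comparable
    (n : ℕ) (hn : 0 < n) (m : ℝ) (hm : 0 < m) (N : ℕ)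
    (ω : Fin n → ℝ) (hωpos : ∀ i, 0 < ω i)
    (hωanti : StrictAnti ω)
    (lam rho : Fin n → ℕ)
    (hmem : (lam, rho) ∈ resonanceSetMin n m ω N)
    (j : Fin n) :
    min (ω ⟨n - 1, by omega⟩) (m / (200 * (N : ℝ) + 1)) *
        (∑ k ∈ Finset.Iic j, ((lam k : ℝ) + (rho k : ℝ))) ≤
      (∑ k ∈ Finset.Iic j, ω k * ((lam k : ℝ) - (rho k : ℝ))) ∧
    (∑ k ∈ Finset.Iic j, ω k * ((lam k : ℝ) - (rho k : ℝ))) ≤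
      ω ⟨0, hn⟩ * (∑ k ∈ Finset.Iic j, ((lam k : ℝ) + (rho k : ℝ))) := by
  have hω₀ : ∀ i, 0 ≤ ω i := fun i => (hωpos i).le
  refine ⟨?_, sum_mul_sub_le_mul_sum_add _ _ _ _ _ (fun k _ => hω₀ k)
    (fun k _ => hωanti.antitone (Nat.zero_le k.val)) (fun k _ => by positivity)
    (fun k _ => by positivity)⟩
  by_cases hρ : ∀ k ∈ Finset.Iic j, rho k = 0
  · exact mul_sum_add_le_sum_mul_sub _ _ _ _ _ (fun k hk => by simp [hρ k hk])
      (fun k _ => (min_le_left _ _).trans (hωanti.antitone (Nat.le_sub_one_of_lt k.isLt)))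
      (fun k _ => by positivity)
  obtain ⟨k, hkj, hk⟩ : ∃ k ∈ Finset.Iic j, rho k ≠ 0 := by simpa using hρ
  rw [resonanceSetMin.sum_Iic_eq_sum_univ hωanti.antitone hω₀ hmem hk (Finset.mem_Iic.mp hkj)
      (fun _ l r => (l : ℝ) + r) (fun _ => by simp),
    resonanceSetMin.sum_Iic_eq_sum_univ hωanti.antitone hω₀ hmem hk (Finset.mem_Iic.mp hkj)
      (fun i l r => ω i * ((l : ℝ) - r)) (fun _ => by simp)]
  calc _ ≤ m / (200 * (N : ℝ) + 1) * ∑ k, ((lam k : ℝ) + (rho k : ℝ)) :=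
        mul_le_mul_of_nonneg_right (min_le_right _ _) (by positivity)
    _ ≤ _ := resonanceSet.mul_sum_le_weight hm.le hmem.1
end

section
/- Let (λ,ρ) ∈ Λ and let F : {1,…,n} → {1,…,n} be any map with F(j) ≤ j for all j. Define θ ∈ ℕ^n by θ_i = ∑_{j : F(j) = i} (λ_j + ρ_j). Then (θ, 0) ∈ Λ. Moreover, for each 1 ≤ j ≤ n, if ∑_{k ≤ j}(λ_k + ρ_k) > 0 then ∑_{k ≤ j} θ_k > 0. -/
/-!
Moving the mass `λ_j + ρ_j` of every index `j` onto the index `F j ≤ j` preserves the total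
degree `|λ+ρ|`, and it can only increase `∑ ω_j (λ_j - ρ_j)`: turning `ρ_j` into `λ_j` trades a
negative contribution for a positive one, and `ω` is decreasing, so `ω_{F j} ≥ ω_j`.
Since mass only moves to lower indices, every partial sum `∑_{k ≤ j}` can only grow.
-/

open Finset

section FiberSum

variable {ι κ M : Type*} [Fintype ι] [DecidableEq κ]

def fiberSum [AddCommMonoid M] (F : ι → κ) (f : ι → M) (i : κ) : M :=
  ∑ j with F j = i, f j

@[simp, norm_cast]
lemma Nat.cast_fiberSum {R : Type*} [AddCommMonoidWithOne R] (F : ι → κ) (f : ι → ℕ) (i : κ) :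
    ((fiberSum F f i : ℕ) : R) = fiberSum F (fun j => (f j : R)) i :=
  Nat.cast_sum _ _

lemma sum_fiberSum [Fintype κ] [AddCommMonoid M] (F : ι → κ) (f : ι → M) :
    ∑ i, fiberSum F f i = ∑ j, f j :=
  sum_fiberwise _ F f

lemma sum_mul_fiberSum [Fintype κ] [NonUnitalNonAssocSemiring M] (F : ι → κ) (w : κ → M)
    (f : ι → M) : ∑ i, w i * fiberSum F f i = ∑ j, w (F j) * f j := by
  rw [← sum_fiberwise univ F fun j => w (F j) * f j]
  refine sum_congr rfl fun i _ => ?_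
  rw [fiberSum, mul_sum]
  exact sum_congr rfl fun j hj => by rw [(mem_filter.1 hj).2]

lemma sum_Iic_le_sum_Iic_fiberSum [Preorder ι] [LocallyFiniteOrderBot ι] [DecidableEq ι]
    [AddCommMonoid M] [PartialOrder M] [CanonicallyOrderedAdd M]
    {F : ι → ι} (hF : ∀ j, F j ≤ j) (f : ι → M) (j : ι) :
    ∑ k ∈ Iic j, f k ≤ ∑ k ∈ Iic j, fiberSum F f k := by
  unfold fiberSum
  rw [sum_fiberwise_eq_sum_filter]
  refine sum_le_sum_of_subset fun k hk => mem_filter.2 ⟨mem_univ k, ?_⟩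
  exact mem_Iic.2 ((hF k).trans (mem_Iic.1 hk))

end FiberSum

lemma sum_mul_sub_le_sum_comp_mul_add {ι : Type*} [Fintype ι] [Preorder ι] {ω : ι → ℝ}
    (hω : Antitone ω) (hω₀ : ∀ i, 0 ≤ ω i) {F : ι → ι} (hF : ∀ j, F j ≤ j) (a b : ι → ℝ)
    (hb : ∀ j, 0 ≤ b j) (hab : ∀ j, 0 ≤ a j + b j) :
    ∑ j, ω j * (a j - b j) ≤ ∑ j, ω (F j) * (a j + b j) := by
  refine sum_le_sum fun j _ => ?_
  calc ω j * (a j - b j) ≤ ω j * (a j + b j) :=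
        mul_le_mul_of_nonneg_left (by linarith [hb j]) (hω₀ j)
    _ ≤ ω (F j) * (a j + b j) := mul_le_mul_of_nonneg_right (hω (hF j)) (hab j)

lemma mk_zero_mem_resonanceSet_iff {n : ℕ} {m : ℝ} {ω : Fin n → ℝ} {N : ℕ} (θ : Fin n → ℕ) :
    (θ, 0) ∈ resonanceSet n m ω N ↔
      Odd (∑ i, θ i) ∧ ∑ i, θ i ≤ 200 * N + 1 ∧ m < ∑ i, ω i * (θ i : ℝ) := by
  simp [resonanceSet]

theorem resonanceSet_rearrangement_general
    (n : ℕ) (m : ℝ) (N : ℕ)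
    (ω : Fin n → ℝ) (hωpos : ∀ i, 0 < ω i)
    (hωanti : StrictAnti ω)
    (lam rho : Fin n → ℕ)
    (hmem : (lam, rho) ∈ resonanceSet n m ω N)
    (F : Fin n → Fin n) (hF : ∀ j, F j ≤ j) :
    ((fun i => ∑ j ∈ Finset.univ.filter (fun j => F j = i), (lam j + rho j)),
      (fun _ => 0)) ∈ resonanceSet n m ω N ∧
    ∀ j : Fin n, 0 < ∑ k ∈ Finset.Iic j, (lam k + rho k) →
      0 < ∑ k ∈ Finset.Iic j,
        ∑ j' ∈ Finset.univ.filter (fun j' => F j' = k), (lam j' + rho j') := by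
  obtain ⟨hodd, hle, hgt⟩ := hmem
  have htotal := sum_fiberSum F fun j => lam j + rho j
  refine ⟨(mk_zero_mem_resonanceSet_iff (fiberSum F fun j => lam j + rho j)).2
      ⟨htotal ▸ hodd, htotal ▸ hle, ?_⟩,
    fun j hj => hj.trans_le (sum_Iic_le_sum_Iic_fiberSum hF _ j)⟩
  calc m < ∑ j, ω j * ((lam j : ℝ) - rho j) := hgt
    _ ≤ ∑ j, ω (F j) * ((lam j : ℝ) + rho j) :=
      sum_mul_sub_le_sum_comp_mul_add hωanti.antitone (fun i => (hωpos i).le) hF _ _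
        (fun j => Nat.cast_nonneg _) (fun j => by positivity)
    _ = ∑ i, ω i * ((fiberSum F (fun j => lam j + rho j) i : ℕ) : ℝ) := by
      push_cast
      exact (sum_mul_fiberSum F ω _).symm

/-- rearrangement along a map `F` with `F(j) ≤ j`: for `(λ,ρ) ∈ Λ`,
the multi-index `θ_i = ∑_{j : F j = i} (λ_j + ρ_j)` satisfies `(θ,0) ∈ Λ`, and
positivity of the partial sums `∑_{k ≤ j}(λ_k+ρ_k)` is inherited by `θ`. -/
theorem resonanceSet_rearrangement
    (n : ℕ) (hn : 0 < n) (m : ℝ) (hm : 0 < m) (N : ℕ) (hN : 1 ≤ N)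
    (ω : Fin n → ℝ) (hωm : ∀ i, ω i < m) (hωpos : ∀ i, 0 < ω i)
    (hωanti : StrictAnti ω)
    (lam rho : Fin n → ℕ)
    (hmem : (lam, rho) ∈ resonanceSet n m ω N)
    (F : Fin n → Fin n) (hF : ∀ j, F j ≤ j) :
    ((fun i => ∑ j ∈ Finset.univ.filter (fun j => F j = i), (lam j + rho j)),
      (fun _ => 0)) ∈ resonanceSet n m ω N ∧
    ∀ j : Fin n, 0 < ∑ k ∈ Finset.Iic j, (lam k + rho k) →
      0 < ∑ k ∈ Finset.Iic j,
        ∑ j' ∈ Finset.univ.filter (fun j' => F j' = k), (lam j' + rho j') :=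
  resonanceSet_rearrangement_general n m N ω hωpos hωanti lam rho hmem F hF
end

section
/- There exist constants c, C > 0, depending only on n, ω_1, ω_n and N, such that for every vector X ∈ ℝ^n with nonnegative entries, setting X̃_j = ∑_{k ≤ j} ω_k X_k for 1 ≤ j ≤ n, one has for every 1 ≤ j ≤ n: c · ∑_{(λ,ρ)∈Λ} ∑_{k ≤ j}(λ_k+ρ_k) X̃^{λ+ρ} ≤ ∑_{(λ,ρ)∈Λ} ∑_{k ≤ j}(λ_k+ρ_k) X^{λ+ρ} ≤ C · ∑_{(λ,ρ)∈Λ} ∑_{k ≤ j}(λ_k+ρ_k) X̃^{λ+ρ}. -/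
open Classical

/-- The resonance set `Λ` of the paper, as a `Finset`: pairs `(λ, ρ)` of multi-indices
in `ℕ^n` with `|λ+ρ|` odd, `|λ+ρ| ≤ 200N+1`, and `∑ ω_j (λ_j - ρ_j) > m`.
(The ambient box `range (200N+2)` is no restriction since `|λ+ρ| ≤ 200N+1`.) -/
noncomputable def resonanceFinset (n : ℕ) (m : ℝ) (ω : Fin n → ℝ) (N : ℕ) :
    Finset ((Fin n → ℕ) × (Fin n → ℕ)) :=
  ((Fintype.piFinset fun _ : Fin n => Finset.range (200 * N + 2)) ×ˢ
      (Fintype.piFinset fun _ : Fin n => Finset.range (200 * N + 2))).filter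
    fun p => Odd (∑ i, (p.1 i + p.2 i)) ∧ (∑ i, (p.1 i + p.2 i)) ≤ 200 * N + 1 ∧
      m < ∑ i, ω i * ((p.1 i : ℝ) - (p.2 i : ℝ))

/-!
Upper bound: `X_i ≤ ω_i⁻¹ X̃_i`, so every monomial `X^{λ+ρ}` is bounded by a constant times
`X̃^{λ+ρ}`, term by term.

Lower bound: let `k(i) ≤ i` be an index where `X` is largest on `{1, …, i}`. Then
`X̃_i ≤ (∑_l ω_l) X_{k(i)}`, so `X̃^{λ+ρ}` is bounded by a constant times `X^μ`, where `μ` is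
the push-forward of `λ+ρ` along `k`. Since `k` moves indices down and `ω` is decreasing,
`∑ ω_l μ_l ≥ ∑ ω_i (λ_i+ρ_i) ≥ ∑ ω_i (λ_i-ρ_i) > m`, so `(μ, 0)` is again resonant, and its
weight `∑_{l ≤ j} μ_l` is at least that of `(λ, ρ)`. Every term of the `X̃`-sum is thus
dominated by a single term of the `X`-sum, and `Λ` is finite.
-/

open Finset

section Monomial

variable {ι κ : Type*} [Fintype ι]

theorem prod_pow_le_pow_mul_prod_pow {u v : ι → ℝ} {K : ℝ} {d : ι → ℕ} {D : ℕ}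
    (hu : ∀ i, 0 ≤ u i) (hv : ∀ i, 0 ≤ v i) (huv : ∀ i, u i ≤ K * v i) (hd : ∑ i, d i ≤ D) :
    ∏ i, u i ^ d i ≤ max 1 K ^ D * ∏ i, v i ^ d i := by
  have hKv : ∀ i, u i ≤ max 1 K * v i := fun i =>
    (huv i).trans (mul_le_mul_of_nonneg_right (le_max_right _ _) (hv i))
  calc ∏ i, u i ^ d i ≤ ∏ i, (max 1 K * v i) ^ d i :=
        prod_le_prod (fun i _ => pow_nonneg (hu i) _) fun i _ => pow_le_pow_left₀ (hu i) (hKv i) _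
    _ = max 1 K ^ (∑ i, d i) * ∏ i, v i ^ d i := by
        simp_rw [mul_pow]
        rw [prod_mul_distrib, prod_pow_eq_pow_sum]
    _ ≤ max 1 K ^ D * ∏ i, v i ^ d i := by
        gcongr
        · exact prod_nonneg fun i _ => pow_nonneg (hv i) _
        · exact le_max_left _ _

def pushExponent [DecidableEq κ] (k : ι → κ) (d : ι → ℕ) (l : κ) : ℕ :=
  ∑ i with k i = l, d i

variable [DecidableEq κ] (k : ι → κ) (d : ι → ℕ)

theorem sum_pushExponent [Fintype κ] : ∑ l, pushExponent k d l = ∑ i, d i :=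
  sum_fiberwise univ k d

theorem sum_pushExponent_eq_sum_filter (s : Finset κ) :
    ∑ l ∈ s, pushExponent k d l = ∑ i with k i ∈ s, d i :=
  sum_fiberwise_eq_sum_filter univ s k d

theorem prod_pow_pushExponent [Fintype κ] {M : Type*} [CommMonoid M] (x : κ → M) :
    ∏ l, x l ^ pushExponent k d l = ∏ i, x (k i) ^ d i := by
  rw [← prod_fiberwise univ k fun i => x (k i) ^ d i]
  refine prod_congr rfl fun l _ => ?_
  rw [pushExponent, ← prod_pow_eq_pow_sum]
  exact prod_congr rfl fun i hi => by rw [(mem_filter.1 hi).2]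

theorem sum_mul_pushExponent [Fintype κ] {R : Type*} [CommSemiring R] (f : κ → R) :
    ∑ l, f l * (pushExponent k d l : R) = ∑ i, f (k i) * (d i : R) := by
  rw [← sum_fiberwise univ k fun i => f (k i) * (d i : R)]
  refine sum_congr rfl fun l _ => ?_
  rw [pushExponent, Nat.cast_sum, mul_sum]
  exact sum_congr rfl fun i hi => by rw [(mem_filter.1 hi).2]

theorem sum_Iic_le_sum_Iic_pushExponent [Preorder ι] [LocallyFiniteOrderBot ι] [DecidableEq ι]
    {k : ι → ι} (hk : ∀ i, k i ≤ i) (j : ι) :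
    ∑ i ∈ Iic j, d i ≤ ∑ l ∈ Iic j, pushExponent k d l := by
  rw [sum_pushExponent_eq_sum_filter]
  refine sum_le_sum_of_subset fun i hi => ?_
  simp only [mem_filter, mem_univ, true_and, mem_Iic] at hi ⊢
  exact (hk i).trans hi

end Monomial

section PrefixSum

variable {ι : Type*} [Preorder ι] [LocallyFiniteOrderBot ι]

theorem exists_forall_le_Iic_apply_le {α : Type*} [LinearOrder α] (x : ι → α) :
    ∃ k : ι → ι, ∀ i, k i ≤ i ∧ ∀ l ≤ i, x l ≤ x (k i) := by
  choose k hk hmax using fun i => exists_max_image (Iic i) x ⟨i, mem_Iic.2 le_rfl⟩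
  exact ⟨k, fun i => ⟨mem_Iic.1 (hk i), fun l hl => hmax i l (mem_Iic.2 hl)⟩⟩

/-- `X̃` of the paper. -/
def weightedPrefixSum (ω x : ι → ℝ) (i : ι) : ℝ :=
  ∑ k ∈ Iic i, ω k * x k

variable {ω x : ι → ℝ}

theorem weightedPrefixSum_nonneg (hω : ∀ i, 0 ≤ ω i) (hx : ∀ i, 0 ≤ x i) (i : ι) :
    0 ≤ weightedPrefixSum ω x i :=
  sum_nonneg fun k _ => mul_nonneg (hω k) (hx k)

theorem weightedPrefixSum_le_sum_mul [Fintype ι] (hω : ∀ i, 0 ≤ ω i) {i : ι} {b : ℝ} (hb : 0 ≤ b)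
    (hx : ∀ l ≤ i, x l ≤ b) : weightedPrefixSum ω x i ≤ (∑ l, ω l) * b :=
  calc weightedPrefixSum ω x i ≤ ∑ l ∈ Iic i, ω l * b :=
        sum_le_sum fun l hl => mul_le_mul_of_nonneg_left (hx l (mem_Iic.1 hl)) (hω l)
    _ = (∑ l ∈ Iic i, ω l) * b := (sum_mul _ _ _).symm
    _ ≤ (∑ l, ω l) * b :=
        mul_le_mul_of_nonneg_right (sum_le_univ_sum_of_nonneg fun l => hω l) hb

theorem le_sum_inv_mul_weightedPrefixSum [Fintype ι] (hω : ∀ i, 0 < ω i) (hx : ∀ i, 0 ≤ x i)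
    (i : ι) :
    x i ≤ (∑ l, (ω l)⁻¹) * weightedPrefixSum ω x i := by
  have hterm : ω i * x i ≤ weightedPrefixSum ω x i :=
    single_le_sum (f := fun k => ω k * x k) (fun k _ => mul_nonneg (hω k).le (hx k))
      (mem_Iic.2 le_rfl)
  calc x i = (ω i)⁻¹ * (ω i * x i) := by rw [inv_mul_cancel_left₀ (hω i).ne']
    _ ≤ (ω i)⁻¹ * weightedPrefixSum ω x i :=
        mul_le_mul_of_nonneg_left hterm (inv_nonneg.2 (hω i).le)
    _ ≤ (∑ l, (ω l)⁻¹) * weightedPrefixSum ω x i :=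
        mul_le_mul_of_nonneg_right
          (single_le_sum (f := fun l => (ω l)⁻¹) (fun l _ => inv_nonneg.2 (hω l).le) (mem_univ i))
          (weightedPrefixSum_nonneg (fun l => (hω l).le) hx i)

end PrefixSum

section WeightedMonomial

variable {ι : Type*} [Fintype ι] [Preorder ι] [LocallyFiniteOrderBot ι]

def weightedMonomial (j : ι) (Y : ι → ℝ) (p : (ι → ℕ) × (ι → ℕ)) : ℝ :=
  (∑ k ∈ Iic j, ((p.1 k : ℝ) + (p.2 k : ℝ))) * ∏ i, Y i ^ (p.1 i + p.2 i)

variable {j : ι} {u v : ι → ℝ} {K : ℝ} {D : ℕ}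

theorem weightedMonomial_nonneg (hY : ∀ i, 0 ≤ u i) (p : (ι → ℕ) × (ι → ℕ)) :
    0 ≤ weightedMonomial j u p :=
  mul_nonneg (sum_nonneg fun _ _ => by positivity) (prod_nonneg fun i _ => pow_nonneg (hY i) _)

theorem weightedMonomial_le_pow_mul (hu : ∀ i, 0 ≤ u i) (hv : ∀ i, 0 ≤ v i)
    (huv : ∀ i, u i ≤ K * v i) {p : (ι → ℕ) × (ι → ℕ)} (hp : ∑ i, (p.1 i + p.2 i) ≤ D) :
    weightedMonomial j u p ≤ max 1 K ^ D * weightedMonomial j v p := by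
  rw [weightedMonomial, weightedMonomial, mul_left_comm]
  exact mul_le_mul_of_nonneg_left (prod_pow_le_pow_mul_prod_pow hu hv huv hp)
    (sum_nonneg fun _ _ => by positivity)

theorem weightedMonomial_le_pow_mul_pushExponent [DecidableEq ι] {k : ι → ι} (hk : ∀ i, k i ≤ i)
    (hu : ∀ i, 0 ≤ u i) (hv : ∀ i, 0 ≤ v i) (huv : ∀ i, u i ≤ K * v (k i))
    {p : (ι → ℕ) × (ι → ℕ)} (hp : ∑ i, (p.1 i + p.2 i) ≤ D) :
    weightedMonomial j u p ≤
      max 1 K ^ D * weightedMonomial j v (pushExponent k fun i => p.1 i + p.2 i, 0) := by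
  set d : ι → ℕ := fun i => p.1 i + p.2 i
  have hweight :
      ∑ i ∈ Iic j, ((p.1 i : ℝ) + (p.2 i : ℝ)) ≤ ∑ l ∈ Iic j, (pushExponent k d l : ℝ) := by
    exact_mod_cast sum_Iic_le_sum_Iic_pushExponent d hk j
  have hprod : ∏ i, u i ^ d i ≤ max 1 K ^ D * ∏ l, v l ^ pushExponent k d l := by
    rw [prod_pow_pushExponent]
    exact prod_pow_le_pow_mul_prod_pow hu (fun i => hv (k i)) huv hp
  simp only [weightedMonomial, Pi.zero_apply, Nat.cast_zero, add_zero]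
  rw [mul_left_comm]
  exact mul_le_mul hweight hprod (prod_nonneg fun i _ => pow_nonneg (hu i) _)
    (sum_nonneg fun _ _ => Nat.cast_nonneg _)

end WeightedMonomial

section Resonance

variable {n : ℕ} {m : ℝ} {ω : Fin n → ℝ} {N : ℕ}

theorem mem_resonanceFinset {p : (Fin n → ℕ) × (Fin n → ℕ)} :
    p ∈ resonanceFinset n m ω N ↔ Odd (∑ i, (p.1 i + p.2 i)) ∧
      ∑ i, (p.1 i + p.2 i) ≤ 200 * N + 1 ∧ m < ∑ i, ω i * ((p.1 i : ℝ) - (p.2 i : ℝ)) := by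
  simp only [resonanceFinset, mem_filter, mem_product, Fintype.mem_piFinset, mem_range,
    and_iff_right_iff_imp]
  intro ⟨_, hsum, _⟩
  have hle : ∀ i, p.1 i + p.2 i ≤ ∑ i, (p.1 i + p.2 i) := fun i =>
    single_le_sum (f := fun i => p.1 i + p.2 i) (fun _ _ => Nat.zero_le _) (mem_univ i)
  exact ⟨fun i => by have := hle i; omega, fun i => by have := hle i; omega⟩

theorem pushExponent_mem_resonanceFinset (hω : ∀ i, 0 ≤ ω i) (hanti : Antitone ω)
    {k : Fin n → Fin n} (hk : ∀ i, k i ≤ i) {p : (Fin n → ℕ) × (Fin n → ℕ)}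
    (hp : p ∈ resonanceFinset n m ω N) :
    (pushExponent k (fun i => p.1 i + p.2 i), 0) ∈ resonanceFinset n m ω N := by
  obtain ⟨hodd, hsum, hres⟩ := mem_resonanceFinset.1 hp
  have hdom : ∑ i, ω i * ((p.1 i : ℝ) - (p.2 i : ℝ)) ≤
      ∑ i, ω (k i) * ((p.1 i + p.2 i : ℕ) : ℝ) := by
    refine sum_le_sum fun i _ => ?_
    push_cast
    calc ω i * ((p.1 i : ℝ) - p.2 i) ≤ ω i * ((p.1 i : ℝ) + p.2 i) :=
          mul_le_mul_of_nonneg_left (by linarith [(p.2 i).cast_nonneg (α := ℝ)]) (hω i)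
      _ ≤ ω (k i) * ((p.1 i : ℝ) + p.2 i) :=
          mul_le_mul_of_nonneg_right (hanti (hk i)) (by positivity)
  refine mem_resonanceFinset.2 ?_
  simp only [Pi.zero_apply, add_zero, Nat.cast_zero, sub_zero, sum_pushExponent,
    sum_mul_pushExponent]
  exact ⟨hodd, hsum, hres.trans_le hdom⟩

theorem sum_weightedMonomial_le_pow_mul_sum_weightedPrefixSum (hω : ∀ i, 0 < ω i)
    {X : Fin n → ℝ} (hX : ∀ i, 0 ≤ X i) (j : Fin n) :
    ∑ p ∈ resonanceFinset n m ω N, weightedMonomial j X p ≤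
      max 1 (∑ i, (ω i)⁻¹) ^ (200 * N + 1) *
        ∑ p ∈ resonanceFinset n m ω N, weightedMonomial j (weightedPrefixSum ω X) p := by
  rw [mul_sum]
  exact sum_le_sum fun p hp => weightedMonomial_le_pow_mul hX
    (weightedPrefixSum_nonneg (fun i => (hω i).le) hX) (le_sum_inv_mul_weightedPrefixSum hω hX)
    (mem_resonanceFinset.1 hp).2.1

theorem sum_weightedMonomial_weightedPrefixSum_le (hω : ∀ i, 0 ≤ ω i) (hanti : Antitone ω)
    {X : Fin n → ℝ} (hX : ∀ i, 0 ≤ X i) (j : Fin n) :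
    ∑ p ∈ resonanceFinset n m ω N, weightedMonomial j (weightedPrefixSum ω X) p ≤
      #(resonanceFinset n m ω N) * (max 1 (∑ i, ω i) ^ (200 * N + 1) *
        ∑ p ∈ resonanceFinset n m ω N, weightedMonomial j X p) := by
  obtain ⟨k, hk⟩ := exists_forall_le_Iic_apply_le X
  have hXk : ∀ i, weightedPrefixSum ω X i ≤ (∑ l, ω l) * X (k i) := fun i =>
    weightedPrefixSum_le_sum_mul hω (hX _) (hk i).2
  rw [← nsmul_eq_mul]
  refine sum_le_card_nsmul _ _ _ fun p hp => ?_
  calc weightedMonomial j (weightedPrefixSum ω X) p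
      ≤ max 1 (∑ i, ω i) ^ (200 * N + 1) *
          weightedMonomial j X (pushExponent k fun i => p.1 i + p.2 i, 0) :=
        weightedMonomial_le_pow_mul_pushExponent (fun i => (hk i).1)
          (weightedPrefixSum_nonneg hω hX) hX hXk (mem_resonanceFinset.1 hp).2.1
    _ ≤ _ := mul_le_mul_of_nonneg_left
        (single_le_sum (fun q _ => weightedMonomial_nonneg hX q)
          (pushExponent_mem_resonanceFinset hω hanti (fun i => (hk i).1) hp))
        (by positivity)

end Resonance

theorem sum_resonance_X_tildeX_comparable_general
    (n : ℕ) (m : ℝ) (N : ℕ)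
    (ω : Fin n → ℝ) (hωpos : ∀ i, 0 < ω i)
    (hωanti : StrictAnti ω) :
    ∃ c > (0 : ℝ), ∃ C > (0 : ℝ), ∀ X : Fin n → ℝ, (∀ k, 0 ≤ X k) → ∀ j : Fin n,
      (c * ∑ p ∈ resonanceFinset n m ω N,
          (∑ k ∈ Finset.Iic j, ((p.1 k : ℝ) + (p.2 k : ℝ))) *
            ∏ i, (∑ k ∈ Finset.Iic i, ω k * X k) ^ (p.1 i + p.2 i) ≤
        ∑ p ∈ resonanceFinset n m ω N,
          (∑ k ∈ Finset.Iic j, ((p.1 k : ℝ) + (p.2 k : ℝ))) *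
            ∏ i, X i ^ (p.1 i + p.2 i)) ∧
      (∑ p ∈ resonanceFinset n m ω N,
          (∑ k ∈ Finset.Iic j, ((p.1 k : ℝ) + (p.2 k : ℝ))) *
            ∏ i, X i ^ (p.1 i + p.2 i) ≤
        C * ∑ p ∈ resonanceFinset n m ω N,
          (∑ k ∈ Finset.Iic j, ((p.1 k : ℝ) + (p.2 k : ℝ))) *
            ∏ i, (∑ k ∈ Finset.Iic i, ω k * X k) ^ (p.1 i + p.2 i)) := by
  set M : ℝ := #(resonanceFinset n m ω N) * max 1 (∑ i, ω i) ^ (200 * N + 1)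
  refine ⟨(M + 1)⁻¹, by positivity, max 1 (∑ i, (ω i)⁻¹) ^ (200 * N + 1), by positivity,
    fun X hX j => ⟨?_, sum_weightedMonomial_le_pow_mul_sum_weightedPrefixSum hωpos hX j⟩⟩
  have hS : 0 ≤ ∑ p ∈ resonanceFinset n m ω N, weightedMonomial j X p :=
    sum_nonneg fun p _ => weightedMonomial_nonneg hX p
  rw [inv_mul_le_iff₀ (by positivity)]
  refine (sum_weightedMonomial_weightedPrefixSum_le (fun i => (hωpos i).le) hωanti.antitone
    hX j).trans ?_
  rw [← mul_assoc]
  exact mul_le_mul_of_nonneg_right (le_add_of_nonneg_right zero_le_one) hS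

/-- with `X̃_j = ∑_{k ≤ j} ω_k X_k`, the weighted sums
`∑_{(λ,ρ)∈Λ} ∑_{k ≤ j}(λ_k+ρ_k) X^{λ+ρ}` and the same expression with `X̃` in place
of `X` are comparable, uniformly in the nonnegative vector `X`. -/
theorem sum_resonance_X_tildeX_comparable
    (n : ℕ) (hn : 0 < n) (m : ℝ) (hm : 0 < m) (N : ℕ) (hN : 1 ≤ N)
    (ω : Fin n → ℝ) (hωm : ∀ i, ω i < m) (hωpos : ∀ i, 0 < ω i)
    (hωanti : StrictAnti ω) :
    ∃ c > (0 : ℝ), ∃ C > (0 : ℝ), ∀ X : Fin n → ℝ, (∀ k, 0 ≤ X k) → ∀ j : Fin n,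
      (c * ∑ p ∈ resonanceFinset n m ω N,
          (∑ k ∈ Finset.Iic j, ((p.1 k : ℝ) + (p.2 k : ℝ))) *
            ∏ i, (∑ k ∈ Finset.Iic i, ω k * X k) ^ (p.1 i + p.2 i) ≤
        ∑ p ∈ resonanceFinset n m ω N,
          (∑ k ∈ Finset.Iic j, ((p.1 k : ℝ) + (p.2 k : ℝ))) *
            ∏ i, X i ^ (p.1 i + p.2 i)) ∧
      (∑ p ∈ resonanceFinset n m ω N,
          (∑ k ∈ Finset.Iic j, ((p.1 k : ℝ) + (p.2 k : ℝ))) *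
            ∏ i, X i ^ (p.1 i + p.2 i) ≤
        C * ∑ p ∈ resonanceFinset n m ω N,
          (∑ k ∈ Finset.Iic j, ((p.1 k : ℝ) + (p.2 k : ℝ))) *
            ∏ i, (∑ k ∈ Finset.Iic i, ω k * X k) ^ (p.1 i + p.2 i)) :=
  sum_resonance_X_tildeX_comparable_general n m N ω hωpos hωanti
end

section
/- There exists a constant C > 0, depending only on n, ω_n and N, such that for every vector X ∈ ℝ^n with 0 ≤ X_k ≤ 1 for all k, setting X̃_j = ∑_{k ≤ j} ω_k X_k, one has for every 1 ≤ j ≤ n: ∑_{(λ,ρ)∈Λ} ∑_{k ≤ j}(λ_k+ρ_k) X^{λ+ρ} ≤ C · ( ∑_{(λ,ρ)∈Λ*} ∑_{k ≤ j}(λ_k+ρ_k) X^{λ+ρ} + X̃_j · ∑_{(λ,ρ)∈Λ*} X^{λ+ρ} ). -/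
/-!
Every `p ∈ Λ` lies above some minimal `q ∈ Λ*`, and `X^{p} ≤ X^{q}` because `0 ≤ X ≤ 1`.
If `q` has positive degree in the first `j` coordinates, the term of `p` is at most `200N+1`
times the term of `q` in the first sum over `Λ*`. Otherwise `p` exceeds `q` in some coordinate
`k ≤ j`, so `X^{p} ≤ X_k X^{q}`, and `X_k ≤ X̃_j / ω_k` puts the term into the second sum.
Since `Λ` is finite, summing these bounds gives the constant.
-/

open Classical

/-- The set `Λ*` of minimal elements of `Λ` with respect to the componentwise order. -/
noncomputable def resonanceFinsetMin (n : ℕ) (m : ℝ) (ω : Fin n → ℝ) (N : ℕ) :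
    Finset ((Fin n → ℕ) × (Fin n → ℕ)) :=
  (resonanceFinset n m ω N).filter
    fun p => ∀ q ∈ resonanceFinset n m ω N,
      (∀ i, q.1 i ≤ p.1 i) → (∀ i, q.2 i ≤ p.2 i) → q = p

open Finset

section Monomial

variable {ι : Type*} [Fintype ι] {X : ι → ℝ}

lemma prod_pow_le_prod_pow_of_le (hX0 : ∀ i, 0 ≤ X i) (hX1 : ∀ i, X i ≤ 1) {a b : ι → ℕ}
    (hab : a ≤ b) : ∏ i, X i ^ b i ≤ ∏ i, X i ^ a i :=
  prod_le_prod (fun i _ => pow_nonneg (hX0 i) _) fun i _ =>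
    pow_le_pow_of_le_one (hX0 i) (hX1 i) (hab i)

lemma prod_pow_le_mul_prod_pow_of_lt (hX0 : ∀ i, 0 ≤ X i) (hX1 : ∀ i, X i ≤ 1)
    {a b : ι → ℕ} (hab : a ≤ b) {k : ι} (hk : a k < b k) :
    ∏ i, X i ^ b i ≤ X k * ∏ i, X i ^ a i := by
  have hle : a + Pi.single k 1 ≤ b := fun i => by
    rcases eq_or_ne i k with rfl | hi
    · simpa using hk
    · simpa [hi] using hab i
  calc ∏ i, X i ^ b i ≤ ∏ i, X i ^ (a + Pi.single k 1 : ι → ℕ) i :=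
        prod_pow_le_prod_pow_of_le hX0 hX1 hle
    _ = X k * ∏ i, X i ^ a i := by
        simp only [Pi.add_apply, pow_add, prod_mul_distrib, mul_comm (X k)]
        congr
        simp [Pi.single_apply]

lemma le_sum_inv_mul_sum_mul {ω : ι → ℝ} (hω : ∀ i, 0 < ω i) (hX0 : ∀ i, 0 ≤ X i)
    {s : Finset ι} {k : ι} (hk : k ∈ s) :
    X k ≤ (∑ i, (ω i)⁻¹) * ∑ i ∈ s, ω i * X i := by
  calc X k = (ω k)⁻¹ * (ω k * X k) := by field_simp [(hω k).ne']
    _ ≤ (∑ i, (ω i)⁻¹) * ∑ i ∈ s, ω i * X i :=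
        mul_le_mul (single_le_sum (fun i _ => inv_nonneg.2 (hω i).le) (mem_univ k))
          (single_le_sum (fun i _ => mul_nonneg (hω i).le (hX0 i)) hk)
          (mul_nonneg (hω k).le (hX0 k)) (sum_nonneg fun i _ => inv_nonneg.2 (hω i).le)

lemma prod_pow_le_of_le_of_sum_ne_zero {ω : ι → ℝ} (hω : ∀ i, 0 < ω i)
    (hX0 : ∀ i, 0 ≤ X i) (hX1 : ∀ i, X i ≤ 1) {a b : ι → ℕ} (hab : a ≤ b) {s : Finset ι}
    (hb : ∑ k ∈ s, b k ≠ 0) :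
    ∏ i, X i ^ b i ≤
      ((∑ k ∈ s, (a k : ℝ)) + (∑ i, (ω i)⁻¹) * ∑ k ∈ s, ω k * X k) * ∏ i, X i ^ a i := by
  have hXa : 0 ≤ ∏ i, X i ^ a i := prod_nonneg fun i _ => pow_nonneg (hX0 i) _
  have ha : 0 ≤ ∑ k ∈ s, (a k : ℝ) := sum_nonneg fun k _ => Nat.cast_nonneg _
  have hXt : 0 ≤ (∑ i, (ω i)⁻¹) * ∑ k ∈ s, ω k * X k :=
    mul_nonneg (sum_nonneg fun i _ => inv_nonneg.2 (hω i).le)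
      (sum_nonneg fun k _ => mul_nonneg (hω k).le (hX0 k))
  by_cases h : ∃ k ∈ s, a k < b k
  · obtain ⟨k, hks, hk⟩ := h
    calc ∏ i, X i ^ b i ≤ X k * ∏ i, X i ^ a i := prod_pow_le_mul_prod_pow_of_lt hX0 hX1 hab hk
      _ ≤ ((∑ i, (ω i)⁻¹) * ∑ k ∈ s, ω k * X k) * ∏ i, X i ^ a i := by
          gcongr
          exact le_sum_inv_mul_sum_mul hω hX0 hks
      _ ≤ _ := by gcongr; exact le_add_of_nonneg_left ha
  · push Not at h
    have hsum : ∑ k ∈ s, a k = ∑ k ∈ s, b k :=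
      sum_congr rfl fun k hk => le_antisymm (hab k) (h k hk)
    have hone : (1 : ℝ) ≤ ∑ k ∈ s, (a k : ℝ) := by
      rw [← Nat.cast_sum, hsum]
      exact_mod_cast Nat.one_le_iff_ne_zero.2 hb
    calc ∏ i, X i ^ b i ≤ ∏ i, X i ^ a i := prod_pow_le_prod_pow_of_le hX0 hX1 hab
      _ ≤ (∑ k ∈ s, (a k : ℝ)) * ∏ i, X i ^ a i := le_mul_of_one_le_left hXa hone
      _ ≤ _ := by gcongr; exact le_add_of_nonneg_right hXt

end Monomial

section Resonance

variable {n : ℕ} {m : ℝ} {ω : Fin n → ℝ} {N : ℕ} {p : (Fin n → ℕ) × (Fin n → ℕ)}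

lemma exists_mem_resonanceFinsetMin_le (hp : p ∈ resonanceFinset n m ω N) :
    ∃ q ∈ resonanceFinsetMin n m ω N, q ≤ p := by
  obtain ⟨q, hqp, hq⟩ :=
    exists_minimal_le_of_wellFoundedLT (· ∈ resonanceFinset n m ω N) p hp
  exact ⟨q, mem_filter.2 ⟨hq.prop, fun r hr h1 h2 => (hq.eq_of_ge hr ⟨h1, h2⟩).symm⟩, hqp⟩

lemma sum_le_of_mem_resonanceFinset (hp : p ∈ resonanceFinset n m ω N) (s : Finset (Fin n)) :
    ∑ k ∈ s, (p.1 k + p.2 k) ≤ 200 * N + 1 :=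
  (sum_le_sum_of_subset (subset_univ s)).trans (mem_filter.1 hp).2.2.1

lemma weight_mul_prod_pow_le_of_mem_resonanceFinset (hω : ∀ i, 0 < ω i) {X : Fin n → ℝ}
    (hX0 : ∀ i, 0 ≤ X i) (hX1 : ∀ i, X i ≤ 1) (hp : p ∈ resonanceFinset n m ω N)
    (s : Finset (Fin n)) :
    (∑ k ∈ s, ((p.1 k : ℝ) + (p.2 k : ℝ))) * ∏ i, X i ^ (p.1 i + p.2 i) ≤
      (200 * N + 1) * ((∑ q ∈ resonanceFinsetMin n m ω N,
          (∑ k ∈ s, ((q.1 k : ℝ) + (q.2 k : ℝ))) * ∏ i, X i ^ (q.1 i + q.2 i)) +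
        (∑ i, (ω i)⁻¹) * (∑ k ∈ s, ω k * X k) *
          ∑ q ∈ resonanceFinsetMin n m ω N, ∏ i, X i ^ (q.1 i + q.2 i)) := by
  have hmono : ∀ r : (Fin n → ℕ) × (Fin n → ℕ), 0 ≤ ∏ i, X i ^ (r.1 i + r.2 i) := fun r =>
    prod_nonneg fun i _ => pow_nonneg (hX0 i) _
  have hc : 0 ≤ (∑ i, (ω i)⁻¹) * ∑ k ∈ s, ω k * X k :=
    mul_nonneg (sum_nonneg fun i _ => inv_nonneg.2 (hω i).le)
      (sum_nonneg fun k _ => mul_nonneg (hω k).le (hX0 k))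
  by_cases hp0 : ∑ k ∈ s, (p.1 k + p.2 k) = 0
  · have hw : ∑ k ∈ s, ((p.1 k : ℝ) + (p.2 k : ℝ)) = 0 := by exact_mod_cast hp0
    have hS₁ : 0 ≤ ∑ q ∈ resonanceFinsetMin n m ω N,
        (∑ k ∈ s, ((q.1 k : ℝ) + (q.2 k : ℝ))) * ∏ i, X i ^ (q.1 i + q.2 i) :=
      sum_nonneg fun r _ => mul_nonneg (by positivity) (hmono r)
    have hS₂ := sum_nonneg fun r (_ : r ∈ resonanceFinsetMin n m ω N) => hmono r
    rw [hw, zero_mul]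
    positivity
  obtain ⟨q, hq, hqp⟩ := exists_mem_resonanceFinsetMin_le hp
  have hdeg : ∑ k ∈ s, ((p.1 k : ℝ) + (p.2 k : ℝ)) ≤ 200 * N + 1 := by
    exact_mod_cast sum_le_of_mem_resonanceFinset hp s
  have hpq := prod_pow_le_of_le_of_sum_ne_zero hω hX0 hX1 (add_le_add hqp.1 hqp.2) hp0
  simp only [Pi.add_apply, Nat.cast_add] at hpq
  calc (∑ k ∈ s, ((p.1 k : ℝ) + (p.2 k : ℝ))) * ∏ i, X i ^ (p.1 i + p.2 i)
      ≤ (200 * N + 1) * ((∑ k ∈ s, ((q.1 k : ℝ) + (q.2 k : ℝ))) * ∏ i, X i ^ (q.1 i + q.2 i) +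
          (∑ i, (ω i)⁻¹) * (∑ k ∈ s, ω k * X k) * ∏ i, X i ^ (q.1 i + q.2 i)) := by
        rw [← add_mul]
        exact mul_le_mul hdeg hpq (hmono p) (by positivity)
    _ ≤ _ := by
        gcongr
        · exact single_le_sum (f := fun r => (∑ k ∈ s, ((r.1 k : ℝ) + (r.2 k : ℝ))) *
            ∏ i, X i ^ (r.1 i + r.2 i)) (fun r _ => mul_nonneg (by positivity) (hmono r)) hq
        · exact single_le_sum (fun r _ => hmono r) hq

end Resonance

theorem sum_resonance_le_minimal_general
    (n : ℕ) (m : ℝ) (N : ℕ)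
    (ω : Fin n → ℝ) (hωpos : ∀ i, 0 < ω i) :
    ∃ C > (0 : ℝ), ∀ X : Fin n → ℝ, (∀ k, 0 ≤ X k) → (∀ k, X k ≤ 1) →
      ∀ j : Fin n,
      ∑ p ∈ resonanceFinset n m ω N,
          (∑ k ∈ Finset.Iic j, ((p.1 k : ℝ) + (p.2 k : ℝ))) *
            ∏ i, X i ^ (p.1 i + p.2 i) ≤
        C * ((∑ p ∈ resonanceFinsetMin n m ω N,
                (∑ k ∈ Finset.Iic j, ((p.1 k : ℝ) + (p.2 k : ℝ))) *
                  ∏ i, X i ^ (p.1 i + p.2 i)) +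
             (∑ k ∈ Finset.Iic j, ω k * X k) *
               ∑ p ∈ resonanceFinsetMin n m ω N, ∏ i, X i ^ (p.1 i + p.2 i)) := by
  set c := ∑ i, (ω i)⁻¹
  have hc : 0 ≤ c := sum_nonneg fun i _ => inv_nonneg.2 (hωpos i).le
  refine ⟨(#(resonanceFinset n m ω N) + 1) * (200 * N + 1) * (1 + c), by positivity,
    fun X hX0 hX1 j => ?_⟩
  set S₁ := ∑ p ∈ resonanceFinsetMin n m ω N,
    (∑ k ∈ Iic j, ((p.1 k : ℝ) + (p.2 k : ℝ))) * ∏ i, X i ^ (p.1 i + p.2 i)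
  set S₂ := ∑ p ∈ resonanceFinsetMin n m ω N, ∏ i, X i ^ (p.1 i + p.2 i)
  set Xt := ∑ k ∈ Iic j, ω k * X k
  have hS₁ : 0 ≤ S₁ := sum_nonneg fun p _ =>
    mul_nonneg (by positivity) (prod_nonneg fun i _ => pow_nonneg (hX0 i) _)
  have hXtS₂ : 0 ≤ Xt * S₂ := mul_nonneg (sum_nonneg fun k _ => mul_nonneg (hωpos k).le (hX0 k))
    (sum_nonneg fun p _ => prod_nonneg fun i _ => pow_nonneg (hX0 i) _)
  calc _ ≤ #(resonanceFinset n m ω N) • ((200 * N + 1) * (S₁ + c * Xt * S₂)) :=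
        sum_le_card_nsmul _ _ _ fun p hp =>
          weight_mul_prod_pow_le_of_mem_resonanceFinset hωpos hX0 hX1 hp (Iic j)
    _ ≤ (#(resonanceFinset n m ω N) + 1) * ((200 * N + 1) * ((1 + c) * (S₁ + Xt * S₂))) := by
        have hcXtS₂ : 0 ≤ c * Xt * S₂ := by rw [mul_assoc]; exact mul_nonneg hc hXtS₂
        have hB : S₁ + c * Xt * S₂ ≤ (1 + c) * (S₁ + Xt * S₂) := by
          nlinarith [mul_nonneg hc hS₁]
        rw [nsmul_eq_mul]
        gcongr
        linarith
    _ = _ := by ring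

/-- for `0 ≤ X ≤ 1` and `X̃_j = ∑_{k ≤ j} ω_k X_k`,
`∑_{Λ} ∑_{k ≤ j}(λ_k+ρ_k) X^{λ+ρ}
  ≤ C (∑_{Λ*} ∑_{k ≤ j}(λ_k+ρ_k) X^{λ+ρ} + X̃_j ∑_{Λ*} X^{λ+ρ})`. -/
theorem sum_resonance_le_minimal
    (n : ℕ) (hn : 0 < n) (m : ℝ) (hm : 0 < m) (N : ℕ) (hN : 1 ≤ N)
    (ω : Fin n → ℝ) (hωm : ∀ i, ω i < m) (hωpos : ∀ i, 0 < ω i)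
    (hωanti : StrictAnti ω) :
    ∃ C > (0 : ℝ), ∀ X : Fin n → ℝ, (∀ k, 0 ≤ X k) → (∀ k, X k ≤ 1) →
      ∀ j : Fin n,
      ∑ p ∈ resonanceFinset n m ω N,
          (∑ k ∈ Finset.Iic j, ((p.1 k : ℝ) + (p.2 k : ℝ))) *
            ∏ i, X i ^ (p.1 i + p.2 i) ≤
        C * ((∑ p ∈ resonanceFinsetMin n m ω N,
                (∑ k ∈ Finset.Iic j, ((p.1 k : ℝ) + (p.2 k : ℝ))) *
                  ∏ i, X i ^ (p.1 i + p.2 i)) +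
             (∑ k ∈ Finset.Iic j, ω k * X k) *
               ∑ p ∈ resonanceFinsetMin n m ω N, ∏ i, X i ^ (p.1 i + p.2 i)) :=
  sum_resonance_le_minimal_general n m N ω hωpos
end

section
/- There exists a constant C > 0, depending only on n, m, ω_1, ω_n and N, with the following property. Let X ∈ ℝ^n satisfy 0 ≤ X_k ≤ 1 for all k, let 1 ≤ j ≤ n, and let ((λ,ρ),(λ',ρ')) be a pair of elements of Λ with λ − ρ = λ' − ρ' such that not both (λ,ρ) and (λ',ρ') belong to Λ*. Then σ := (λ + ρ + λ' + ρ')/2 is a well-defined element of ℕ^n (componentwise), and X^σ · (λ_j + ρ'_j) ≤ C · ( (max_{1≤k≤n} X_k) · ∑_{(a,b)∈Λ*} X^{a+b}(a_j + b_j) + X_j · ∑_{(a,b)∈Λ*} X^{a+b} ). -/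
/-!
Put `σ = λ + ρ' = λ' + ρ`, so that `2σ = (λ + ρ) + (λ' + ρ')`. It suffices to split
`2σ = c + c'` so that each of `c`, `c'` is positive at `j` and lies strictly above the degree
vector `a + b` of some `(a, b) ∈ Λ*`: then `X^c` is at most `X_j X^{a+b}` or, when
`a_j + b_j ≥ 1`, at most `M X^{a+b}`, so `(X^σ)² = X^c X^{c'}` is at most the square of the
bracket, while `σ_j ≤ 200N + 1`. The split moves a single unit between `λ + ρ` and `λ' + ρ'`.
If one of the pairs has both `j`-th entries positive, lowering both by one keeps it in `Λ`
(the resonance condition only sees `λ - ρ`). Otherwise both pairs have positive `j`-th degree,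
and the non-minimal pair exceeds an element of `Λ*` by at least two in total degree, because all
degrees in `Λ` are odd.
-/

open Classical

open Finset

section Monomials

variable {ι R : Type*} [Fintype ι] [CommSemiring R] {X : ι → R}

lemma prod_pow_antitone [PartialOrder R] [IsOrderedRing R] (hX0 : ∀ i, 0 ≤ X i)
    (hX1 : ∀ i, X i ≤ 1) {f g : ι → ℕ} (hfg : f ≤ g) :
    ∏ i, X i ^ g i ≤ ∏ i, X i ^ f i :=
  prod_le_prod (fun i _ => pow_nonneg (hX0 i) _)
    fun i _ => pow_le_pow_of_le_one (hX0 i) (hX1 i) (hfg i)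

lemma prod_pow_add_single [DecidableEq ι] (f : ι → ℕ) (i : ι) :
    ∏ l, X l ^ (f + Pi.single i 1 : ι → ℕ) l = X i * ∏ l, X l ^ f l := by
  rw [mul_comm]
  simp only [Pi.add_apply, pow_add, prod_mul_distrib]
  congr 1
  simp [Pi.single_apply, pow_ite]

end Monomials

section NatVectors

variable {ι : Type*}

lemma sub_single_add_single [DecidableEq ι] {s : ι → ℕ} {i : ι} (hi : 1 ≤ s i) :
    s - Pi.single i 1 + Pi.single i 1 = s := by
  refine tsub_add_cancel_of_le fun l => ?_
  by_cases hl : l = i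
  · subst hl; simpa
  · simp [hl]

lemma sum_add_two_le_of_lt_of_odd [Fintype ι] {f g : ι → ℕ} (hfg : f < g) (hf : Odd (∑ i, f i))
    (hg : Odd (∑ i, g i)) : ∑ i, f i + 2 ≤ ∑ i, g i := by
  have := Fintype.sum_strictMono hfg
  obtain ⟨a, ha⟩ := hf
  obtain ⟨b, hb⟩ := hg
  simp only at this
  omega

lemma exists_lt_add_single_eq [Fintype ι] [DecidableEq ι] {f s : ι → ℕ} (j : ι) (hfs : f ≤ s)
    (hsum : ∑ i, f i + 2 ≤ ∑ i, s i) (hj : 1 ≤ s j) :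
    ∃ c i, f < c ∧ 1 ≤ c j ∧ c + Pi.single i 1 = s := by
  obtain ⟨i, hi, hij⟩ : ∃ i, f i < s i ∧ (i = j → f j + 2 ≤ s j) := by
    by_contra! h
    have hrest : ∑ l ∈ univ.erase j, s l ≤ ∑ l ∈ univ.erase j, f l :=
      sum_le_sum fun l hl => by
        by_contra! hlt
        exact absurd (h l hlt).1 (ne_of_mem_erase hl)
    have := add_sum_erase univ s (mem_univ j)
    have := add_sum_erase univ f (mem_univ j)
    have := hfs j
    have := h j
    omega
  have hcancel := sub_single_add_single (show 1 ≤ s i by omega)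
  refine ⟨s - Pi.single i 1, i, lt_of_le_of_ne (fun l => ?_) fun hfc => ?_, ?_, hcancel⟩
  · by_cases hl : l = i
    · subst hl; simp; omega
    · simpa [hl] using hfs l
  · have := congrArg (fun g : ι → ℕ => ∑ l, g l) hcancel
    simp only [Pi.add_apply, sum_add_distrib, sum_pi_single', if_pos (mem_univ i), ← hfc] at this
    omega
  · by_cases hl : i = j
    · subst hl; have := hij rfl; simp; omega
    · simpa [Ne.symm hl] using hj

end NatVectors

section Resonance

variable {n : ℕ} {m : ℝ} {ω : Fin n → ℝ} {N : ℕ}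

local notation "Λ" => resonanceFinset n m ω N
local notation "Λ*" => resonanceFinsetMin n m ω N

lemma mem_resonanceFinset_iff {p : (Fin n → ℕ) × (Fin n → ℕ)} :
    p ∈ Λ ↔ Odd (∑ i, (p.1 i + p.2 i)) ∧ ∑ i, (p.1 i + p.2 i) ≤ 200 * N + 1 ∧
      m < ∑ i, ω i * ((p.1 i : ℝ) - p.2 i) := by
  simp only [resonanceFinset, mem_filter, mem_product, Fintype.mem_piFinset, mem_range,
    and_iff_right_iff_imp]
  refine fun ⟨_, hle, _⟩ => ⟨fun i => ?_, fun i => ?_⟩ <;>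
  · have := single_le_sum (f := fun i => p.1 i + p.2 i) (fun _ _ => Nat.zero_le _) (mem_univ i)
    omega

lemma mem_resonanceFinsetMin_iff {p : (Fin n → ℕ) × (Fin n → ℕ)} :
    p ∈ Λ* ↔ Minimal (· ∈ Λ) p := by
  simp only [resonanceFinsetMin, mem_filter, Minimal]
  refine and_congr_right fun _ => forall₂_congr fun q _ =>
    ⟨fun h hqp => (h hqp.1 hqp.2).ge, fun h h1 h2 =>
      have hqp : q ≤ p := Prod.le_def.2 ⟨h1, h2⟩
      le_antisymm hqp (h hqp)⟩

lemma exists_mem_resonanceFinsetMin_le_s10 {p : (Fin n → ℕ) × (Fin n → ℕ)} (hp : p ∈ Λ) :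
    ∃ a ∈ Λ*, a ≤ p := by
  obtain ⟨a, hap, ha⟩ := exists_minimal_le_of_wellFoundedLT (· ∈ Λ) p hp
  exact ⟨a, mem_resonanceFinsetMin_iff.2 ha, hap⟩

lemma exists_mem_resonanceFinsetMin_lt {p : (Fin n → ℕ) × (Fin n → ℕ)} (hp : p ∈ Λ)
    (hmin : p ∉ Λ*) : ∃ a ∈ Λ*, a < p := by
  rw [mem_resonanceFinsetMin_iff, not_minimal_iff_exists_lt hp] at hmin
  obtain ⟨q, hqp, hq⟩ := hmin
  obtain ⟨a, ha, haq⟩ := exists_mem_resonanceFinsetMin_le_s10 hq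
  exact ⟨a, ha, haq.trans_lt hqp⟩

lemma apply_add_apply_le_of_mem_resonanceFinset {μ ν μ' ν' : Fin n → ℕ} (h : (μ, ν) ∈ Λ)
    (h' : (μ', ν') ∈ Λ) (hσ : μ + ν' = μ' + ν) (j : Fin n) : μ j + ν' j ≤ 200 * N + 1 := by
  have hdeg : ∀ p : (Fin n → ℕ) × (Fin n → ℕ), p ∈ Λ → p.1 j + p.2 j ≤ 200 * N + 1 :=
    fun p hp => (single_le_sum (f := fun i => p.1 i + p.2 i) (fun _ _ => Nat.zero_le _)
      (mem_univ j)).trans (mem_resonanceFinset_iff.1 hp).2.1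
  have := hdeg _ h
  have := hdeg _ h'
  have := congrFun hσ j
  dsimp only [Pi.add_apply] at *
  omega

lemma mem_resonanceFinset_of_add_single {μ ν : Fin n → ℕ} {j : Fin n}
    (h : (μ + Pi.single j 1, ν + Pi.single j 1) ∈ Λ) : (μ, ν) ∈ Λ := by
  obtain ⟨hodd, hle, hres⟩ := mem_resonanceFinset_iff.1 h
  dsimp only at hodd hle hres
  have hdeg : ∑ i, ((μ + Pi.single j 1 : Fin n → ℕ) i + (ν + Pi.single j 1 : Fin n → ℕ) i) =
      ∑ i, (μ i + ν i) + 2 := by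
    rw [← one_add_one_eq_two]
    simp only [Pi.add_apply, add_add_add_comm, sum_add_distrib, sum_pi_single', if_pos (mem_univ j)]
  refine mem_resonanceFinset_iff.2 ⟨?_, by dsimp only; omega, ?_⟩
  · rw [hdeg] at hodd
    exact (Nat.odd_add.1 hodd).2 even_two
  · convert hres using 2
    simp only [Pi.add_apply, Nat.cast_add]
    ring

variable (n m ω N) in
def ExceedsMinimal (j : Fin n) (c : Fin n → ℕ) : Prop :=
  1 ≤ c j ∧ ∃ a ∈ resonanceFinsetMin n m ω N, a.1 + a.2 < c

lemma exceedsMinimal_add_single {p : (Fin n → ℕ) × (Fin n → ℕ)} (hp : p ∈ Λ) {i j : Fin n}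
    (hij : i = j ∨ 1 ≤ p.1 j + p.2 j) : ExceedsMinimal n m ω N j (p.1 + p.2 + Pi.single i 1) := by
  obtain ⟨b, hb, hbp⟩ := exists_mem_resonanceFinsetMin_le_s10 hp
  refine ⟨?_, b, hb, (add_le_add hbp.1 hbp.2).trans_lt (lt_add_of_pos_right _ ?_)⟩
  · rcases hij with rfl | hj
    · simp
    · simp only [Pi.add_apply]; omega
  · exact lt_of_le_of_ne zero_le fun h => by simpa using congrFun h i

lemma exists_exceedsMinimal_add_single_eq_of_one_le {p : (Fin n → ℕ) × (Fin n → ℕ)}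
    (hp : p ∈ Λ) {j : Fin n} (h1 : 1 ≤ p.1 j) (h2 : 1 ≤ p.2 j) :
    ∃ c, ExceedsMinimal n m ω N j c ∧ c + Pi.single j 1 = p.1 + p.2 := by
  have hc1 := sub_single_add_single h1
  have hc2 := sub_single_add_single h2
  have hq : (p.1 - Pi.single j 1, p.2 - Pi.single j 1) ∈ Λ :=
    mem_resonanceFinset_of_add_single (j := j) (by rwa [hc1, hc2])
  refine ⟨_, exceedsMinimal_add_single hq (Or.inl rfl), ?_⟩
  rw [add_assoc, ← add_add_add_comm, hc1, hc2]

lemma exists_exceedsMinimal_add_single_eq_of_not_mem {p : (Fin n → ℕ) × (Fin n → ℕ)}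
    (hp : p ∈ Λ) (hmin : p ∉ Λ*) {j : Fin n} (hj : 1 ≤ p.1 j + p.2 j) :
    ∃ c i, ExceedsMinimal n m ω N j c ∧ c + Pi.single i 1 = p.1 + p.2 := by
  obtain ⟨a, ha, hap⟩ := exists_mem_resonanceFinsetMin_lt hp hmin
  have hdeg : a.1 + a.2 < p.1 + p.2 := by
    rcases Prod.lt_iff.1 hap with ⟨h1, h2⟩ | ⟨h1, h2⟩
    · exact add_lt_add_of_lt_of_le h1 h2
    · exact add_lt_add_of_le_of_lt h1 h2
  have hsum := sum_add_two_le_of_lt_of_odd hdeg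
    (mem_resonanceFinset_iff.1 ((mem_filter.1 ha).1)).1 (mem_resonanceFinset_iff.1 hp).1
  obtain ⟨c, i, hac, hcj, hc⟩ := exists_lt_add_single_eq j hdeg.le hsum hj
  exact ⟨c, i, ⟨hcj, a, ha, hac⟩, hc⟩

lemma exists_exceedsMinimal_split_of_not_mem {μ ν μ' ν' : Fin n → ℕ} (h : (μ, ν) ∈ Λ)
    (h' : (μ', ν') ∈ Λ) (hmin : (μ, ν) ∉ Λ*) (hσ : μ + ν' = μ' + ν) {j : Fin n}
    (hj : 1 ≤ μ j + ν' j) :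
    ∃ c c', ExceedsMinimal n m ω N j c ∧ ExceedsMinimal n m ω N j c' ∧
      c + c' = μ + ν + (μ' + ν') := by
  have hσj := congrFun hσ j
  simp only [Pi.add_apply] at hσj
  by_cases hμν : 1 ≤ μ j ∧ 1 ≤ ν j
  · obtain ⟨c, hc, hce⟩ := exists_exceedsMinimal_add_single_eq_of_one_le h hμν.1 hμν.2
    exact ⟨c, _, hc, exceedsMinimal_add_single h' (Or.inl rfl), by rw [← hce]; abel⟩
  by_cases hμν' : 1 ≤ μ' j ∧ 1 ≤ ν' j
  · obtain ⟨c', hc', hce⟩ := exists_exceedsMinimal_add_single_eq_of_one_le h' hμν'.1 hμν'.2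
    exact ⟨_, c', exceedsMinimal_add_single h (Or.inl rfl), hc', by rw [← hce]; abel⟩
  -- now `(μ j, ν j) = (μ' j, ν' j)` is `(σ_j, 0)` or `(0, σ_j)` with `σ_j = μ j + ν' j ≥ 1`
  obtain ⟨c, i, hc, hce⟩ := exists_exceedsMinimal_add_single_eq_of_not_mem h hmin (j := j)
    (by dsimp only; omega)
  exact ⟨c, _, hc, exceedsMinimal_add_single h' (Or.inr (by dsimp only; omega)),
    by rw [← hce]; abel⟩

lemma exists_exceedsMinimal_split {μ ν μ' ν' : Fin n → ℕ} (h : (μ, ν) ∈ Λ)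
    (h' : (μ', ν') ∈ Λ) (hmin : ¬((μ, ν) ∈ Λ* ∧ (μ', ν') ∈ Λ*)) (hσ : μ + ν' = μ' + ν)
    {j : Fin n} (hj : 1 ≤ μ j + ν' j) :
    ∃ c c', ExceedsMinimal n m ω N j c ∧ ExceedsMinimal n m ω N j c' ∧
      c + c' = μ + ν + (μ' + ν') := by
  rcases not_and_or.1 hmin with hmin | hmin
  · exact exists_exceedsMinimal_split_of_not_mem h h' hmin hσ hj
  · have hσj := congrFun hσ j
    simp only [Pi.add_apply] at hσj
    obtain ⟨c, c', hc, hc', hcc'⟩ :=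
      exists_exceedsMinimal_split_of_not_mem h' h hmin hσ.symm (j := j) (by omega)
    exact ⟨c', c, hc', hc, by rw [add_comm, hcc', add_comm]⟩

variable (n m ω N) in
noncomputable def minimalResonanceBound (X : Fin n → ℝ) (M : ℝ) (j : Fin n) : ℝ :=
  M * (∑ p ∈ resonanceFinsetMin n m ω N,
      (∏ i, X i ^ (p.1 i + p.2 i)) * ((p.1 j : ℝ) + (p.2 j : ℝ))) +
    X j * ∑ p ∈ resonanceFinsetMin n m ω N, ∏ i, X i ^ (p.1 i + p.2 i)

section Bounds

variable {X : Fin n → ℝ} {M : ℝ}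

lemma minimalResonanceBound_nonneg (hX0 : ∀ i, 0 ≤ X i) (hM : 0 ≤ M) (j : Fin n) :
    0 ≤ minimalResonanceBound n m ω N X M j :=
  add_nonneg
    (mul_nonneg hM (sum_nonneg fun _ _ => mul_nonneg (prod_nonneg fun i _ => pow_nonneg (hX0 i) _)
      (by positivity)))
    (mul_nonneg (hX0 j) (sum_nonneg fun _ _ => prod_nonneg fun i _ => pow_nonneg (hX0 i) _))

lemma prod_pow_le_of_exceedsMinimal (hX0 : ∀ i, 0 ≤ X i) (hX1 : ∀ i, X i ≤ 1)
    (hXM : ∀ i, X i ≤ M) {j : Fin n} {c : Fin n → ℕ} (hc : ExceedsMinimal n m ω N j c) :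
    ∏ i, X i ^ c i ≤ minimalResonanceBound n m ω N X M j := by
  obtain ⟨hcj, a, ha, hac⟩ := hc
  obtain ⟨hle, i, hi⟩ := Pi.lt_def.1 hac
  have hM : 0 ≤ M := (hX0 i).trans (hXM i)
  have hprod_nonneg : ∀ f : Fin n → ℕ, 0 ≤ ∏ l, X l ^ f l :=
    fun f => prod_nonneg fun l _ => pow_nonneg (hX0 l) _
  set Xa := ∏ l, X l ^ (a.1 l + a.2 l)
  set S := ∑ p ∈ resonanceFinsetMin n m ω N, ∏ l, X l ^ (p.1 l + p.2 l)
  set T := ∑ p ∈ resonanceFinsetMin n m ω N,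
    (∏ l, X l ^ (p.1 l + p.2 l)) * ((p.1 j : ℝ) + (p.2 j : ℝ))
  have hS : Xa ≤ S :=
    single_le_sum (f := fun p => ∏ l, X l ^ (p.1 l + p.2 l)) (fun p _ => hprod_nonneg _) ha
  have hT : Xa * ((a.1 j : ℝ) + a.2 j) ≤ T :=
    single_le_sum (f := fun p => (∏ l, X l ^ (p.1 l + p.2 l)) * ((p.1 j : ℝ) + (p.2 j : ℝ)))
      (fun p _ => mul_nonneg (hprod_nonneg _) (by positivity)) ha
  have hT0 : 0 ≤ T := sum_nonneg fun p _ => mul_nonneg (hprod_nonneg _) (by positivity)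
  have hfactor : ∀ k, (a.1 + a.2) k < c k → ∏ l, X l ^ c l ≤ X k * Xa := fun k hk => by
    rw [← prod_pow_add_single]
    refine prod_pow_antitone hX0 hX1 fun l => ?_
    by_cases hl : l = k
    · subst hl; simpa using hk
    · simpa [hl] using hle l
  by_cases hj : (a.1 + a.2) j < c j
  · calc ∏ l, X l ^ c l ≤ X j * Xa := hfactor j hj
      _ ≤ X j * S := mul_le_mul_of_nonneg_left hS (hX0 j)
      _ ≤ M * T + X j * S := le_add_of_nonneg_left (mul_nonneg hM hT0)
  · have haj : (1 : ℝ) ≤ a.1 j + a.2 j := by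
      have := hle j
      simp only [Pi.add_apply] at hj this
      exact_mod_cast (by omega : 1 ≤ a.1 j + a.2 j)
    calc ∏ l, X l ^ c l ≤ X i * Xa := hfactor i hi
      _ ≤ M * (Xa * ((a.1 j : ℝ) + a.2 j)) :=
        mul_le_mul (hXM i) (le_mul_of_one_le_right (hprod_nonneg _) haj) (hprod_nonneg _) hM
      _ ≤ M * T + X j * S :=
        le_add_of_le_of_nonneg (mul_le_mul_of_nonneg_left hT hM)
          (mul_nonneg (hX0 j) ((hprod_nonneg _).trans hS))

lemma prod_pow_le_of_two_mul_eq_add (hX0 : ∀ i, 0 ≤ X i) (hX1 : ∀ i, X i ≤ 1)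
    (hXM : ∀ i, X i ≤ M) {j : Fin n} {σ c c' : Fin n → ℕ}
    (hσ : ∀ i, 2 * σ i = c i + c' i) (hc : ExceedsMinimal n m ω N j c)
    (hc' : ExceedsMinimal n m ω N j c') :
    ∏ i, X i ^ σ i ≤ minimalResonanceBound n m ω N X M j := by
  have hbound := prod_pow_le_of_exceedsMinimal hX0 hX1 hXM hc
  have hbound' := prod_pow_le_of_exceedsMinimal hX0 hX1 hXM hc'
  have hprod_nonneg : ∀ f : Fin n → ℕ, 0 ≤ ∏ i, X i ^ f i :=
    fun f => prod_nonneg fun i _ => pow_nonneg (hX0 i) _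
  refine le_of_pow_le_pow_left₀ two_ne_zero ((hprod_nonneg c).trans hbound) ?_
  calc (∏ i, X i ^ σ i) ^ 2 = (∏ i, X i ^ c i) * ∏ i, X i ^ c' i := by
        simp only [← prod_pow, ← prod_mul_distrib, ← pow_mul, mul_comm _ 2, hσ, pow_add]
    _ ≤ _ := by
        rw [sq]
        exact mul_le_mul hbound hbound' (hprod_nonneg c') ((hprod_nonneg c).trans hbound)

end Bounds

end Resonance

theorem nonminimal_pair_perturbative_bound_general
    (n : ℕ) (hn : 0 < n) (m : ℝ) (N : ℕ)
    (ω : Fin n → ℝ) :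
    ∃ C > (0 : ℝ), ∀ X : Fin n → ℝ, (∀ k, 0 ≤ X k) → (∀ k, X k ≤ 1) →
      ∀ j : Fin n, ∀ lam rho lam' rho' : Fin n → ℕ,
      (lam, rho) ∈ resonanceFinset n m ω N →
      (lam', rho') ∈ resonanceFinset n m ω N →
      (∀ i, (lam i : ℤ) - (rho i : ℤ) = (lam' i : ℤ) - (rho' i : ℤ)) →
      ¬((lam, rho) ∈ resonanceFinsetMin n m ω N ∧
        (lam', rho') ∈ resonanceFinsetMin n m ω N) →
      (∀ i, 2 ∣ (lam i + rho i + lam' i + rho' i)) ∧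
      (∏ i, X i ^ ((lam i + rho i + lam' i + rho' i) / 2)) *
          ((lam j : ℝ) + (rho' j : ℝ)) ≤
        C * ((Finset.univ.sup' ⟨⟨0, hn⟩, Finset.mem_univ _⟩ X) *
              (∑ p ∈ resonanceFinsetMin n m ω N,
                (∏ i, X i ^ (p.1 i + p.2 i)) * ((p.1 j : ℝ) + (p.2 j : ℝ))) +
            X j * ∑ p ∈ resonanceFinsetMin n m ω N, ∏ i, X i ^ (p.1 i + p.2 i)) := by
  refine ⟨200 * N + 1, by positivity, fun X hX0 hX1 j lam rho lam' rho' h h' hdiff hmin => ?_⟩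
  have hσ : lam + rho' = lam' + rho := funext fun i => by
    have := hdiff i
    simp only [Pi.add_apply]
    omega
  have hσ2 : ∀ i, lam i + rho i + lam' i + rho' i = 2 * (lam i + rho' i) := fun i => by
    have := congrFun hσ i
    simp only [Pi.add_apply] at this
    omega
  refine ⟨fun i => ⟨_, hσ2 i⟩, ?_⟩
  simp only [hσ2, Nat.mul_div_cancel_left _ two_pos]
  have hXM : ∀ i, X i ≤ univ.sup' ⟨⟨0, hn⟩, mem_univ _⟩ X := fun i => le_sup' X (mem_univ i)
  have hD := minimalResonanceBound_nonneg (m := m) (ω := ω) (N := N) hX0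
    ((hX0 j).trans (hXM j)) j
  have hcoef : (lam j : ℝ) + rho' j ≤ 200 * N + 1 := by
    exact_mod_cast apply_add_apply_le_of_mem_resonanceFinset h h' hσ j
  obtain hzero | hpos := Nat.eq_zero_or_pos (lam j + rho' j)
  · rw [show (lam j : ℝ) + rho' j = 0 by exact_mod_cast hzero, mul_zero]
    exact mul_nonneg (by positivity) hD
  obtain ⟨c, c', hc, hc', hcc'⟩ := exists_exceedsMinimal_split h h' hmin hσ hpos
  have hX := prod_pow_le_of_two_mul_eq_add hX0 hX1 hXM (σ := lam + rho') (fun i => by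
    have := congrFun hcc' i
    simp only [Pi.add_apply] at this ⊢
    linarith [hσ2 i]) hc hc'
  calc _ ≤ minimalResonanceBound n m ω N X _ j * (200 * N + 1) :=
        mul_le_mul hX hcoef (by positivity) hD
    _ = _ := mul_comm _ _

/-- for `0 ≤ X ≤ 1` and a pair `(λ,ρ), (λ',ρ') ∈ Λ` with
`λ - ρ = λ' - ρ'` not both minimal, `σ = (λ+ρ+λ'+ρ')/2` is a well-defined
multi-index and `X^σ (λ_j + ρ'_j)` is dominated by
`C ((max_k X_k) ∑_{Λ*} X^{a+b}(a_j+b_j) + X_j ∑_{Λ*} X^{a+b})`. -/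
theorem nonminimal_pair_perturbative_bound
    (n : ℕ) (hn : 0 < n) (m : ℝ) (hm : 0 < m) (N : ℕ) (hN : 1 ≤ N)
    (ω : Fin n → ℝ) (hωm : ∀ i, ω i < m) (hωpos : ∀ i, 0 < ω i)
    (hωanti : StrictAnti ω) :
    ∃ C > (0 : ℝ), ∀ X : Fin n → ℝ, (∀ k, 0 ≤ X k) → (∀ k, X k ≤ 1) →
      ∀ j : Fin n, ∀ lam rho lam' rho' : Fin n → ℕ,
      (lam, rho) ∈ resonanceFinset n m ω N →
      (lam', rho') ∈ resonanceFinset n m ω N →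
      (∀ i, (lam i : ℤ) - (rho i : ℤ) = (lam' i : ℤ) - (rho' i : ℤ)) →
      ¬((lam, rho) ∈ resonanceFinsetMin n m ω N ∧
        (lam', rho') ∈ resonanceFinsetMin n m ω N) →
      (∀ i, 2 ∣ (lam i + rho i + lam' i + rho' i)) ∧
      (∏ i, X i ^ ((lam i + rho i + lam' i + rho' i) / 2)) *
          ((lam j : ℝ) + (rho' j : ℝ)) ≤
        C * ((Finset.univ.sup' ⟨⟨0, hn⟩, Finset.mem_univ _⟩ X) *
              (∑ p ∈ resonanceFinsetMin n m ω N,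
                (∏ i, X i ^ (p.1 i + p.2 i)) * ((p.1 j : ℝ) + (p.2 j : ℝ))) +
            X j * ∑ p ∈ resonanceFinsetMin n m ω N, ∏ i, X i ^ (p.1 i + p.2 i)) :=
  nonminimal_pair_perturbative_bound_general n hn m N ω
end

section
/- Let N ≥ 1 be an integer and κ > 0. There exists a constant C > 0, depending only on N and κ, such that for every ε ∈ (0, 1/2]: ∫_0^∞ ε²(1 + 2N ε^{4N} t)^{−1/(2N)} · ε^κ (1 + ε^κ t)^{−1} dt ≤ C ε. -/
/-!
Interpolating the two bounds `W ≤ ε^κ` and `W ≤ 1/t` gives `W(t) ≤ ε^(κδ) t^(δ-1)` for every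
`δ ∈ [0, 1]`. Then `∫₀^∞ Y W` is at most `ε^(2+κδ)` times `∫₀^∞ t^(δ-1) (1 + a t)^(-p)`, with
`a = 2N ε^(4N)` and `p = 1/(2N)`; by scaling this is `a^(-δ)` times the Beta-type integral
`∫₀^∞ u^(δ-1) (1 + u)^(-p)`, which is finite for `0 < δ < p`. The choice `δ = 1/(4N)` makes
`a^(-δ) ≤ 1/ε`, so the total is at most a constant times `ε² · ε^(κδ) / ε ≤ ε`.
-/

open MeasureTheory Set Filter Asymptotics

namespace Real

lemma integrableOn_Ioi_rpow_mul_one_add_rpow_neg {δ p : ℝ} (hδ : 0 < δ) (hδp : δ < p) :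
    IntegrableOn (fun u : ℝ => u ^ (δ - 1) * (1 + u) ^ (-p)) (Ioi 0) := by
  have hcont : ContinuousOn (fun u : ℝ => (1 + u) ^ (-p)) (Ioi 0) :=
    ContinuousOn.rpow_const (by fun_prop) fun u (hu : 0 < u) => Or.inl (by positivity)
  refine mellin_convergent_of_isBigO_scalar (a := p) (b := 0)
    (hcont.locallyIntegrableOn measurableSet_Ioi) ?_ hδp ?_ hδ
  · refine IsBigO.of_bound 1 ?_
    filter_upwards [eventually_gt_atTop 0] with u hu
    rw [norm_of_nonneg (by positivity), norm_of_nonneg (by positivity), one_mul]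
    exact rpow_le_rpow_of_nonpos hu (by linarith) (by linarith)
  · refine IsBigO.of_bound 1 ?_
    filter_upwards [self_mem_nhdsWithin] with u (hu : 0 < u)
    rw [neg_zero, rpow_zero, norm_one, one_mul, norm_of_nonneg (by positivity)]
    exact rpow_le_one_of_one_le_of_nonpos (by linarith) (by linarith)

lemma integral_Ioi_rpow_mul_one_add_rpow_neg_pos {δ p : ℝ} (hδ : 0 < δ) (hδp : δ < p) :
    0 < ∫ u in Ioi (0 : ℝ), u ^ (δ - 1) * (1 + u) ^ (-p) := by
  have hpos : ∀ u ∈ Ioi (0 : ℝ), 0 < u ^ (δ - 1) * (1 + u) ^ (-p) := fun u (hu : 0 < u) => by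
    positivity
  rw [setIntegral_pos_iff_support_of_nonneg_ae
    ((ae_restrict_iff' measurableSet_Ioi).mpr (ae_of_all _ fun u hu => (hpos u hu).le))
    (integrableOn_Ioi_rpow_mul_one_add_rpow_neg hδ hδp)]
  rw [inter_eq_right.mpr fun u hu => Function.mem_support.mpr (hpos u hu).ne', volume_Ioi]
  exact ENNReal.zero_lt_top

lemma rpow_mul_one_add_mul_rpow_neg_eqOn (δ p : ℝ) {a : ℝ} (ha : 0 < a) :
    EqOn (fun t : ℝ => t ^ (δ - 1) * (1 + a * t) ^ (-p))
      (fun t => a ^ (1 - δ) * ((a * t) ^ (δ - 1) * (1 + a * t) ^ (-p))) (Ioi 0) :=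
  fun t (ht : 0 < t) => by
    dsimp only
    rw [mul_rpow ha.le ht.le, ← mul_assoc, ← mul_assoc, ← rpow_add ha, sub_add_sub_cancel',
      sub_self, rpow_zero, one_mul]

lemma integrableOn_Ioi_rpow_mul_one_add_mul_rpow_neg {δ p a : ℝ} (hδ : 0 < δ) (hδp : δ < p)
    (ha : 0 < a) :
    IntegrableOn (fun t : ℝ => t ^ (δ - 1) * (1 + a * t) ^ (-p)) (Ioi 0) := by
  refine IntegrableOn.congr_fun ?_ (rpow_mul_one_add_mul_rpow_neg_eqOn δ p ha).symm
    measurableSet_Ioi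
  refine ((integrableOn_Ioi_comp_mul_left_iff (fun u => u ^ (δ - 1) * (1 + u) ^ (-p)) 0 ha).mpr
    ?_).const_mul _
  rw [mul_zero]
  exact integrableOn_Ioi_rpow_mul_one_add_rpow_neg hδ hδp

lemma integral_Ioi_rpow_mul_one_add_mul_rpow_neg (δ p : ℝ) {a : ℝ} (ha : 0 < a) :
    ∫ t in Ioi (0 : ℝ), t ^ (δ - 1) * (1 + a * t) ^ (-p) =
      a ^ (-δ) * ∫ u in Ioi (0 : ℝ), u ^ (δ - 1) * (1 + u) ^ (-p) := by
  rw [setIntegral_congr_fun measurableSet_Ioi (rpow_mul_one_add_mul_rpow_neg_eqOn δ p ha),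
    integral_const_mul, integral_comp_mul_left_Ioi (fun u => u ^ (δ - 1) * (1 + u) ^ (-p)) 0 ha,
    mul_zero, smul_eq_mul, ← mul_assoc, ← rpow_neg_one, ← rpow_add ha]
  ring_nf

lemma mul_inv_one_add_mul_le {b t δ : ℝ} (hb : 0 ≤ b) (ht : 0 < t) (hδ : 0 ≤ δ) (hδ1 : δ ≤ 1) :
    b * (1 + b * t)⁻¹ ≤ b ^ δ * t ^ (δ - 1) := by
  have hwt : b * (1 + b * t)⁻¹ ≤ t⁻¹ := by
    rw [← div_eq_mul_inv, div_le_iff₀ (by positivity)]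
    field_simp
    linarith
  set w := b * (1 + b * t)⁻¹
  have hw : 0 ≤ w := by positivity
  have hwb : w ≤ b := mul_le_of_le_one_right hb (inv_le_one_of_one_le₀ (by nlinarith))
  calc w = w ^ δ * w ^ (1 - δ) := by rw [← rpow_add' hw (by norm_num), add_sub_cancel, rpow_one]
    _ ≤ b ^ δ * t⁻¹ ^ (1 - δ) := by gcongr
    _ = b ^ δ * t ^ (δ - 1) := by rw [inv_rpow ht.le, ← rpow_neg ht.le, neg_sub]

lemma integral_one_add_mul_rpow_neg_mul_le {a b p δ : ℝ} (ha : 0 < a) (hb : 0 ≤ b) (hδ : 0 < δ)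
    (hδp : δ < p) (hδ1 : δ ≤ 1) :
    ∫ t in Ioi (0 : ℝ), (1 + a * t) ^ (-p) * (b * (1 + b * t)⁻¹) ≤
      b ^ δ * a ^ (-δ) * ∫ u in Ioi (0 : ℝ), u ^ (δ - 1) * (1 + u) ^ (-p) := by
  calc ∫ t in Ioi (0 : ℝ), (1 + a * t) ^ (-p) * (b * (1 + b * t)⁻¹)
      ≤ ∫ t in Ioi (0 : ℝ), b ^ δ * (t ^ (δ - 1) * (1 + a * t) ^ (-p)) := by
        refine integral_mono_of_nonneg (ae_restrict_of_forall_mem measurableSet_Ioi ?_)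
          ((integrableOn_Ioi_rpow_mul_one_add_mul_rpow_neg hδ hδp ha).const_mul _)
          (ae_restrict_of_forall_mem measurableSet_Ioi ?_)
        · intro t (ht : 0 < t)
          positivity
        · intro t (ht : 0 < t)
          exact (mul_le_mul_of_nonneg_left (mul_inv_one_add_mul_le hb ht hδ.le hδ1)
            (by positivity)).trans_eq (by ring)
    _ = b ^ δ * a ^ (-δ) * ∫ u in Ioi (0 : ℝ), u ^ (δ - 1) * (1 + u) ^ (-p) := by
        rw [integral_const_mul, integral_Ioi_rpow_mul_one_add_mul_rpow_neg δ p ha, mul_assoc]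

lemma mul_pow_rpow_neg_one_div_le {c ε : ℝ} {n : ℕ} (hc : 1 ≤ c) (hε : 0 < ε) (hn : n ≠ 0) :
    (c * ε ^ n) ^ (-(1 / n : ℝ)) ≤ ε⁻¹ :=
  calc (c * ε ^ n) ^ (-(1 / n : ℝ)) ≤ (ε ^ n) ^ (-(1 / n : ℝ)) :=
        rpow_le_rpow_of_nonpos (by positivity) (le_mul_of_one_le_left (by positivity) hc)
          (by simp only [one_div, Left.neg_nonpos_iff, inv_nonneg, Nat.cast_nonneg])
    _ = ε⁻¹ := by
        rw [← rpow_natCast, ← rpow_mul hε.le, ← rpow_neg_one]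
        field_simp

end Real

open Real in
/-- with `Y(t) = ε²(1+2Nε^{4N}t)^{-1/(2N)}` and
`W(t) = ε^κ(1+ε^κ t)^{-1}`, one has `∫_0^∞ Y W dt ≤ C ε` uniformly for `ε ∈ (0,1/2]`. -/
theorem integral_Y_mul_W_le
    (N : ℕ) (hN : 1 ≤ N) (κ : ℝ) (hκ : 0 < κ) :
    ∃ C > (0 : ℝ), ∀ ε : ℝ, 0 < ε → ε ≤ 1 / 2 →
      ∫ t in Set.Ioi (0 : ℝ),
          (ε ^ 2 * (1 + 2 * (N : ℝ) * ε ^ (4 * N) * t) ^ (-(1 / (2 * (N : ℝ))))) *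
            (ε ^ κ * (1 + ε ^ κ * t)⁻¹) ≤ C * ε := by
  have hN1 : (1 : ℝ) ≤ N := by exact_mod_cast hN
  set p : ℝ := 1 / (2 * N)
  set δ : ℝ := 1 / (4 * N)
  have hδ : 0 < δ := by positivity
  have hδp : δ < p := one_div_lt_one_div_of_lt (by positivity) (by linarith)
  have hδ1 : δ ≤ 1 := div_le_one_of_le₀ (by linarith) (by positivity)
  refine ⟨_, integral_Ioi_rpow_mul_one_add_rpow_neg_pos hδ hδp, fun ε hε hε2 => ?_⟩
  have hεκ : (ε ^ κ) ^ δ ≤ 1 :=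
    rpow_le_one (by positivity) (rpow_le_one hε.le (by linarith) hκ.le) hδ.le
  have hε4N : (2 * N * ε ^ (4 * N)) ^ (-δ) ≤ ε⁻¹ := by
    simpa [δ] using
      mul_pow_rpow_neg_one_div_le (c := 2 * N) (by linarith) hε (by omega : 4 * N ≠ 0)
  simp only [mul_assoc (ε ^ 2)]
  rw [integral_const_mul]
  calc ε ^ 2 * ∫ t in Ioi (0 : ℝ), _ ≤ ε ^ 2 * ((ε ^ κ) ^ δ * (2 * N * ε ^ (4 * N)) ^ (-δ) *
        ∫ u in Ioi (0 : ℝ), u ^ (δ - 1) * (1 + u) ^ (-p)) := by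
        gcongr
        exact integral_one_add_mul_rpow_neg_mul_le (by positivity) (by positivity) hδ hδp hδ1
    _ ≤ ε ^ 2 * (1 * ε⁻¹ * ∫ u in Ioi (0 : ℝ), u ^ (δ - 1) * (1 + u) ^ (-p)) := by
        gcongr
        exact (integral_Ioi_rpow_mul_one_add_rpow_neg_pos hδ hδp).le
    _ = _ := by field_simp
end

section
/- Let b > 1 and 0 < γ ≤ b be real numbers. There exists a constant C > 0, depending only on b and γ, such that for every c ∈ (0,1] and every t ≥ 0: ∫_0^t (1 + t − s)^{−b} (1 + c s)^{−γ} ds ≤ C (1 + c t)^{−γ}. -/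
/-!
Split the integral at `s = t / 2`. On `[t/2, t]` the weight `(1 + c s)^{-γ}` is at most
`2^γ (1 + c t)^{-γ}`, while `∫ (1 + t - s)^{-b} ≤ 1 / (b - 1)` uniformly in `t`. On `[0, t/2]`,
once `c t ≥ 1`, the kernel `(1 + t - s)^{-b}` is of size `(c / (1 + c t))^b`, which, since
`γ ≤ b`, allows trading `(1 + c s)^{-γ}` for the integrable `c (1 + c s)^{-b}`. When `c t ≤ 1`
the weight is harmless and the first estimate already covers all of `[0, t]`.
-/

open intervalIntegral

open Set MeasureTheory

lemma integral_one_add_rpow_neg_le {b A B : ℝ} (hb : 1 < b) (hA : 0 ≤ A) (hB : 0 ≤ B) :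
    ∫ u in A..B, (1 + u) ^ (-b) ≤ 1 / (b - 1) := by
  have h0 : (0 : ℝ) ∉ uIcc (1 + A) (1 + B) := fun h => by
    rcases le_total A B with hAB | hAB
    · rw [uIcc_of_le (by linarith)] at h; linarith [h.1]
    · rw [uIcc_of_ge (by linarith)] at h; linarith [h.1]
  rw [integral_comp_add_left (fun x => x ^ (-b)) 1, integral_rpow (Or.inr ⟨by linarith, h0⟩),
    show -b + 1 = -(b - 1) by ring, div_neg, ← neg_div, neg_sub]
  have hB' : 0 ≤ (1 + B) ^ (-(b - 1)) := by positivity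
  have hA' : (1 + A) ^ (-(b - 1)) ≤ 1 :=
    Real.rpow_le_one_of_one_le_of_nonpos (by linarith) (by linarith)
  exact div_le_div_of_nonneg_right (by linarith) (by linarith)

lemma integral_one_add_sub_rpow_neg_le {b t A B : ℝ} (hb : 1 < b) (hA : A ≤ t) (hB : B ≤ t) :
    ∫ s in A..B, (1 + t - s) ^ (-b) ≤ 1 / (b - 1) := by
  simp_rw [add_sub_assoc]
  rw [integral_comp_sub_left (fun u => (1 + u) ^ (-b)) t]
  exact integral_one_add_rpow_neg_le hb (by linarith) (by linarith)

lemma integral_mul_one_add_mul_rpow_neg_le {b c A B : ℝ} (hb : 1 < b) (hc : 0 ≤ c)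
    (hA : 0 ≤ A) (hB : 0 ≤ B) :
    ∫ s in A..B, c * (1 + c * s) ^ (-b) ≤ 1 / (b - 1) := by
  rw [intervalIntegral.integral_const_mul,
    mul_integral_comp_mul_left (f := fun u => (1 + u) ^ (-b))]
  exact integral_one_add_rpow_neg_le hb (mul_nonneg hc hA) (mul_nonneg hc hB)

lemma rpow_neg_le_mul_rpow_neg_of_le_mul {x y K γ : ℝ} (hx : 0 < x) (hy : 0 < y) (hγ : 0 ≤ γ)
    (h : y ≤ K * x) : x ^ (-γ) ≤ K ^ γ * y ^ (-γ) := by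
  have hK : 0 < K := pos_of_mul_pos_left (hy.trans_le h) hx.le
  rw [Real.rpow_neg hx.le, Real.rpow_neg hy.le, ← div_eq_mul_inv,
    le_div_iff₀ (by positivity), inv_mul_le_iff₀ (by positivity), mul_comm,
    ← Real.mul_rpow hK.le hx.le]
  exact Real.rpow_le_rpow hy.le h hγ

lemma rpow_neg_le_rpow_sub_mul_rpow_neg {x y γ b : ℝ} (hx : 0 < x) (hxy : x ≤ y) (hγb : γ ≤ b) :
    x ^ (-γ) ≤ y ^ (b - γ) * x ^ (-b) := by
  calc x ^ (-γ) = x ^ (b - γ) * x ^ (-b) := by rw [← Real.rpow_add hx]; ring_nf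
    _ ≤ y ^ (b - γ) * x ^ (-b) := by gcongr

lemma integral_le_mul_of_le_mul {f g : ℝ → ℝ} {A B K M : ℝ} (hAB : A ≤ B)
    (hf : IntervalIntegrable f volume A B) (hg : IntervalIntegrable g volume A B) (hK : 0 ≤ K)
    (hfg : ∀ s ∈ Icc A B, f s ≤ K * g s) (hgM : ∫ s in A..B, g s ≤ M) :
    ∫ s in A..B, f s ≤ K * M := by
  calc ∫ s in A..B, f s ≤ ∫ s in A..B, K * g s := integral_mono_on hAB hf (hg.const_mul K) hfg
    _ = K * ∫ s in A..B, g s := integral_const_mul K g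
    _ ≤ K * M := by gcongr

lemma continuousOn_one_add_mul_rpow {c : ℝ} (hc : 0 ≤ c) (p : ℝ) :
    ContinuousOn (fun s : ℝ => (1 + c * s) ^ p) (Ici 0) :=
  (Continuous.continuousOn (by fun_prop)).rpow_const fun s hs =>
    Or.inl (by nlinarith [mem_Ici.1 hs] : 1 + c * s ≠ 0)

lemma continuousOn_one_add_sub_rpow (t p : ℝ) :
    ContinuousOn (fun s : ℝ => (1 + t - s) ^ p) (Iic t) :=
  (Continuous.continuousOn (by fun_prop)).rpow_const fun s hs =>
    Or.inl (by linarith [mem_Iic.1 hs] : 1 + t - s ≠ 0)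

section ConvolutionKernel

variable {b γ c t : ℝ}

lemma intervalIntegrable_convolution_kernel (hc : 0 ≤ c) {A B : ℝ} (hA : 0 ≤ A) (hAB : A ≤ B)
    (hB : B ≤ t) :
    IntervalIntegrable (fun s => (1 + t - s) ^ (-b) * (1 + c * s) ^ (-γ)) volume A B :=
  ContinuousOn.intervalIntegrable_of_Icc hAB <|
    ((continuousOn_one_add_sub_rpow t (-b)).mono fun _ hs => hs.2.trans hB).mul
      ((continuousOn_one_add_mul_rpow hc (-γ)).mono fun _ hs => hA.trans hs.1)

lemma integral_convolution_kernel_le_of_near (hb : 1 < b) (hγ : 0 ≤ γ) (hc : 0 ≤ c) {A : ℝ}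
    (hA : 0 ≤ A) (hAt : A ≤ t) (hnear : 1 + c * t ≤ 2 * (1 + c * A)) :
    ∫ s in A..t, (1 + t - s) ^ (-b) * (1 + c * s) ^ (-γ) ≤
      2 ^ γ * (1 + c * t) ^ (-γ) * (1 / (b - 1)) := by
  refine integral_le_mul_of_le_mul hAt (intervalIntegrable_convolution_kernel hc hA hAt le_rfl)
    (ContinuousOn.intervalIntegrable_of_Icc hAt <|
      (continuousOn_one_add_sub_rpow t (-b)).mono fun _ hs => hs.2)
    (mul_nonneg (by positivity) (Real.rpow_nonneg (by nlinarith) _)) (fun s hs => ?_)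
    (integral_one_add_sub_rpow_neg_le hb hAt le_rfl)
  have hs0 : 0 ≤ c * s := mul_nonneg hc (hA.trans hs.1)
  have hweight : (1 + c * s) ^ (-γ) ≤ 2 ^ γ * (1 + c * t) ^ (-γ) :=
    rpow_neg_le_mul_rpow_neg_of_le_mul (by linarith) (by nlinarith) hγ
      (hnear.trans (by nlinarith [hs.1]))
  calc (1 + t - s) ^ (-b) * (1 + c * s) ^ (-γ)
      ≤ (1 + t - s) ^ (-b) * (2 ^ γ * (1 + c * t) ^ (-γ)) := by
        gcongr
        exact Real.rpow_nonneg (by linarith [hs.2]) _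
    _ = 2 ^ γ * (1 + c * t) ^ (-γ) * (1 + t - s) ^ (-b) := by ring

/-- The factor `c` is there to cancel the `1 / c` produced by integrating `(1 + c s)^{-b}`;
it comes from `1 + c t ≤ 4 c (1 + t - s)` and `c^b ≤ c`. -/
lemma convolution_kernel_le_of_far (hb : 1 < b) (hγb : γ ≤ b) (hc : 0 < c) (hc1 : c ≤ 1)
    (hct : 1 ≤ c * t) {s : ℝ} (hs : s ∈ Icc 0 (t / 2)) :
    (1 + t - s) ^ (-b) * (1 + c * s) ^ (-γ) ≤
      4 ^ b * (1 + c * t) ^ (-γ) * (c * (1 + c * s) ^ (-b)) := by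
  have ht : 0 < t := pos_of_mul_pos_right (one_pos.trans_le hct) hc.le
  have hcs : 0 ≤ c * s := mul_nonneg hc.le hs.1
  have hst : c * s ≤ c * t := by nlinarith [hs.2]
  have hkernel : (1 + t - s) ^ (-b) ≤ 4 ^ b * c * (1 + c * t) ^ (-b) := by
    calc (1 + t - s) ^ (-b) ≤ (4 * c) ^ b * (1 + c * t) ^ (-b) :=
          rpow_neg_le_mul_rpow_neg_of_le_mul (by linarith [hs.2]) (by linarith) (by linarith)
            (by nlinarith [hs.2])
      _ ≤ 4 ^ b * c * (1 + c * t) ^ (-b) := by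
          rw [Real.mul_rpow (by norm_num) hc.le]
          gcongr
          simpa using Real.rpow_le_rpow_of_exponent_ge hc hc1 hb.le
  have hweight : (1 + c * s) ^ (-γ) ≤ (1 + c * t) ^ (b - γ) * (1 + c * s) ^ (-b) :=
    rpow_neg_le_rpow_sub_mul_rpow_neg (by linarith) (by linarith) hγb
  have hsplit : (1 + c * t) ^ (-b) * (1 + c * t) ^ (b - γ) = (1 + c * t) ^ (-γ) := by
    rw [← Real.rpow_add (by linarith)]
    ring_nf
  calc (1 + t - s) ^ (-b) * (1 + c * s) ^ (-γ)
      ≤ 4 ^ b * c * (1 + c * t) ^ (-b) * ((1 + c * t) ^ (b - γ) * (1 + c * s) ^ (-b)) := by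
        gcongr
    _ = 4 ^ b * (1 + c * t) ^ (-γ) * (c * (1 + c * s) ^ (-b)) := by
        rw [← hsplit]
        ring

lemma integral_convolution_kernel_le_of_far (hb : 1 < b) (hγb : γ ≤ b) (hc : 0 < c)
    (hc1 : c ≤ 1) (hct : 1 ≤ c * t) :
    ∫ s in (0 : ℝ)..t / 2, (1 + t - s) ^ (-b) * (1 + c * s) ^ (-γ) ≤
      4 ^ b * (1 + c * t) ^ (-γ) * (1 / (b - 1)) := by
  have ht : 0 ≤ t / 2 := by nlinarith
  refine integral_le_mul_of_le_mul ht
    (intervalIntegrable_convolution_kernel hc.le le_rfl ht (by linarith))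
    (ContinuousOn.intervalIntegrable_of_Icc ht <| continuousOn_const.mul <|
      (continuousOn_one_add_mul_rpow hc.le (-b)).mono fun _ hs => hs.1)
    (mul_nonneg (by positivity) (Real.rpow_nonneg (by nlinarith) _))
    (fun s hs => convolution_kernel_le_of_far hb hγb hc hc1 hct hs)
    (integral_mul_one_add_mul_rpow_neg_le hb hc.le le_rfl ht)

end ConvolutionKernel

/-- the weighted convolution estimate
`∫_0^t (1+t-s)^{-b} (1+cs)^{-γ} ds ≤ C (1+ct)^{-γ}` for `b > 1`, `0 < γ ≤ b`,
uniformly for `c ∈ (0,1]` and `t ≥ 0`. -/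
theorem convolution_weighted_decay
    (b γ : ℝ) (hb : 1 < b) (hγ0 : 0 < γ) (hγb : γ ≤ b) :
    ∃ C > (0 : ℝ), ∀ c : ℝ, 0 < c → c ≤ 1 → ∀ t : ℝ, 0 ≤ t →
      (∫ s in (0 : ℝ)..t, (1 + t - s) ^ (-b) * (1 + c * s) ^ (-γ)) ≤
        C * (1 + c * t) ^ (-γ) := by
  refine ⟨(2 ^ γ + 4 ^ b) / (b - 1), by positivity, fun c hc hc1 t ht => ?_⟩
  rcases le_or_gt (c * t) 1 with hsmall | hlarge
  · calc _ ≤ 2 ^ γ * (1 + c * t) ^ (-γ) * (1 / (b - 1)) :=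
          integral_convolution_kernel_le_of_near hb hγ0.le hc.le le_rfl ht (by linarith)
      _ = 2 ^ γ / (b - 1) * (1 + c * t) ^ (-γ) := by ring
      _ ≤ (2 ^ γ + 4 ^ b) / (b - 1) * (1 + c * t) ^ (-γ) := by
          gcongr
          exact le_add_of_nonneg_right (by positivity)
  · have ht2 : 0 ≤ t / 2 := by positivity
    rw [← integral_add_adjacent_intervals
      (intervalIntegrable_convolution_kernel hc.le le_rfl ht2 (by linarith))
      (intervalIntegrable_convolution_kernel hc.le ht2 (by linarith) le_rfl)]
    calc _ ≤ 4 ^ b * (1 + c * t) ^ (-γ) * (1 / (b - 1)) +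
            2 ^ γ * (1 + c * t) ^ (-γ) * (1 / (b - 1)) :=
          add_le_add (integral_convolution_kernel_le_of_far hb hγb hc hc1 hlarge.le)
            (integral_convolution_kernel_le_of_near hb hγ0.le hc.le ht2 (by linarith)
              (by linarith))
      _ = (2 ^ γ + 4 ^ b) / (b - 1) * (1 + c * t) ^ (-γ) := by ring
end

section
/- Let N ≥ 1 be an integer, κ ∈ (0, 8], and δ ∈ (0, 1/2). There exists a constant C > 0, depending only on N, κ and δ, such that for every ε ∈ (0,1]: ∫_0^∞ [ ε^{2−δ} Y(s)^{1/2} W(s)^{3/2} + ε³ (1+s)^{−9/8} Y(s)^{1/2} W(s)^{1/2} + ε⁷ (1+s)^{−9/4} ] ds ≤ C ε^{3 + κ/2 − 2δ}, where Y(s) = ε² (1 + 2N ε^{4N} s)^{−1/(2N)} and W(s) = ε^κ (1 + ε^κ s)^{−1}. -/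
/-
Since the exponent `-1/(2N)` is nonpositive, `Y^{1/2} ≤ ε` pointwise, so the integrand is dominated
by `ε^{3-δ} W^{3/2} + ε⁴ (1+s)^{-9/8} + ε⁷ (1+s)^{-9/4}` (using also `W ≤ ε^κ` in the middle term).
Each piece is an explicit power of an affine function: `∫₀^∞ W^{3/2} = 2 ε^{κ/2}`, and the other two
integrals are constants. The resulting powers `ε^{3+κ/2-δ}`, `ε^{4+κ/2}`, `ε⁷` are all at most
`ε^{3+κ/2-2δ}` for `ε ≤ 1`, since `δ ≥ 0` and `κ ≤ 8`.
-/

open MeasureTheory Set Real Filter Topology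

namespace ErrorIntegral

theorem integral_Ioi_one_add_mul_rpow {a p : ℝ} (ha : 0 < a) (hp : p < -1) :
    IntegrableOn (fun s => (1 + a * s) ^ p) (Ioi 0) ∧
      ∫ s in Ioi (0 : ℝ), (1 + a * s) ^ p = (a * (-1 - p))⁻¹ := by
  have hpos : ∀ s ∈ Ici (0 : ℝ), 0 < 1 + a * s := fun s hs => by
    nlinarith [mul_nonneg ha.le (mem_Ici.mp hs)]
  set F : ℝ → ℝ := fun s => (1 + a * s) ^ (p + 1) / (a * (p + 1))
  have hF : ∀ s ∈ Ici (0 : ℝ), HasDerivAt F ((1 + a * s) ^ p) s := fun s hs => by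
    have h := ((((hasDerivAt_id' s).const_mul a).const_add 1).rpow_const
      (p := p + 1) (Or.inl (hpos s hs).ne')).div_const (a * (p + 1))
    refine h.congr_deriv ?_
    rw [add_sub_cancel_right]
    field_simp [ha.ne', (by linarith : p + 1 ≠ 0)]
  have hF_nonneg : ∀ s ∈ Ioi (0 : ℝ), 0 ≤ (1 + a * s) ^ p := fun s hs =>
    (rpow_pos_of_pos (hpos s (Ioi_subset_Ici_self hs)) p).le
  have hF_top : Tendsto F atTop (𝓝 0) := by
    have h_lin : Tendsto (fun s : ℝ => 1 + a * s) atTop atTop :=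
      tendsto_atTop_add_const_left _ _ (tendsto_id.const_mul_atTop ha)
    have h_pow : Tendsto (fun y : ℝ => y ^ (p + 1)) atTop (𝓝 0) := by
      simpa using tendsto_rpow_neg_atTop (y := -(p + 1)) (by linarith)
    simpa using (h_pow.comp h_lin).div_const (a * (p + 1))
  refine ⟨integrableOn_Ioi_deriv_of_nonneg' hF hF_nonneg hF_top, ?_⟩
  rw [integral_Ioi_of_hasDerivAt_of_nonneg' hF hF_nonneg hF_top]
  simp only [F, mul_zero, add_zero, one_rpow]
  rw [show a * (-1 - p) = -(a * (p + 1)) by ring, inv_neg]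
  ring


noncomputable def Y (N : ℕ) (ε s : ℝ) : ℝ :=
  ε ^ 2 * (1 + 2 * (N : ℝ) * ε ^ (4 * N) * s) ^ (-(1 / (2 * (N : ℝ))))

noncomputable def W (κ ε s : ℝ) : ℝ :=
  ε ^ κ * (1 + ε ^ κ * s)⁻¹

noncomputable def errorIntegrand (N : ℕ) (κ δ ε s : ℝ) : ℝ :=
  ε ^ (2 - δ) * Y N ε s ^ ((1 : ℝ) / 2) * W κ ε s ^ ((3 : ℝ) / 2) +
    ε ^ 3 * (1 + s) ^ (-(9 / 8 : ℝ)) * Y N ε s ^ ((1 : ℝ) / 2) * W κ ε s ^ ((1 : ℝ) / 2) +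
    ε ^ 7 * (1 + s) ^ (-(9 / 4 : ℝ))

noncomputable def errorMajorant (κ δ ε s : ℝ) : ℝ :=
  ε ^ (3 - δ + 3 * κ / 2) * (1 + ε ^ κ * s) ^ (-(3 / 2 : ℝ)) +
    ε ^ (4 + κ / 2) * (1 + s) ^ (-(9 / 8 : ℝ)) +
    ε ^ 7 * (1 + s) ^ (-(9 / 4 : ℝ))

variable {N : ℕ} {κ δ ε s : ℝ}

theorem Y_nonneg (hε : 0 ≤ ε) (hs : 0 ≤ s) : 0 ≤ Y N ε s := by
  unfold Y
  have : 0 ≤ 1 + 2 * (N : ℝ) * ε ^ (4 * N) * s := by positivity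
  positivity

theorem Y_rpow_half_le (hε : 0 ≤ ε) (hs : 0 ≤ s) : Y N ε s ^ ((1 : ℝ) / 2) ≤ ε := by
  have h_decay : (1 + 2 * (N : ℝ) * ε ^ (4 * N) * s) ^ (-(1 / (2 * (N : ℝ)))) ≤ 1 :=
    rpow_le_one_of_one_le_of_nonpos (le_add_of_nonneg_right (by positivity))
      (neg_nonpos.mpr (by positivity))
  calc Y N ε s ^ ((1 : ℝ) / 2) ≤ (ε ^ 2) ^ ((1 : ℝ) / 2) := by
        gcongr
        · exact Y_nonneg hε hs
        · exact mul_le_of_le_one_right (by positivity) h_decay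
    _ = ε := by
        rw [← rpow_natCast, ← rpow_mul hε]
        norm_num

theorem W_rpow (hε : 0 ≤ ε) (hs : 0 ≤ s) (q : ℝ) :
    W κ ε s ^ q = (ε ^ κ) ^ q * (1 + ε ^ κ * s) ^ (-q) := by
  have : 0 < 1 + ε ^ κ * s := by positivity
  rw [W, mul_rpow (by positivity) (by positivity), inv_rpow this.le, rpow_neg this.le]

theorem errorIntegrand_nonneg (hε : 0 ≤ ε) (hs : 0 ≤ s) : 0 ≤ errorIntegrand N κ δ ε s := by
  have := Y_nonneg (N := N) hε hs
  have : 0 ≤ W κ ε s := by unfold W; positivity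
  unfold errorIntegrand
  positivity

theorem errorIntegrand_le_errorMajorant (hε : 0 < ε) (hs : 0 ≤ s) :
    errorIntegrand N κ δ ε s ≤ errorMajorant κ δ ε s := by
  have hY := Y_rpow_half_le (N := N) hε.le hs
  have hY_nonneg : 0 ≤ Y N ε s ^ ((1 : ℝ) / 2) := rpow_nonneg (Y_nonneg hε.le hs) _
  have hW_decay : (1 + ε ^ κ * s) ^ (-(1 / 2 : ℝ)) ≤ 1 :=
    rpow_le_one_of_one_le_of_nonpos (le_add_of_nonneg_right (by positivity)) (by norm_num)
  have h_first : ε ^ (2 - δ) * Y N ε s ^ ((1 : ℝ) / 2) * W κ ε s ^ ((3 : ℝ) / 2) ≤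
      ε ^ (3 - δ + 3 * κ / 2) * (1 + ε ^ κ * s) ^ (-(3 / 2 : ℝ)) := by
    rw [W_rpow hε.le hs, show 3 - δ + 3 * κ / 2 = 2 - δ + 1 + κ * (3 / 2) by ring,
      rpow_add hε, rpow_add hε, rpow_one, rpow_mul hε.le]
    calc _ ≤ ε ^ (2 - δ) * ε * ((ε ^ κ) ^ ((3 : ℝ) / 2) * (1 + ε ^ κ * s) ^ (-(3 / 2 : ℝ))) := by
          gcongr
      _ = _ := by ring
  have h_second : ε ^ 3 * (1 + s) ^ (-(9 / 8 : ℝ)) * Y N ε s ^ ((1 : ℝ) / 2) *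
      W κ ε s ^ ((1 : ℝ) / 2) ≤ ε ^ (4 + κ / 2) * (1 + s) ^ (-(9 / 8 : ℝ)) := by
    rw [W_rpow hε.le hs, show 4 + κ / 2 = ((3 : ℕ) : ℝ) + 1 + κ * (1 / 2) by push_cast; ring,
      rpow_add hε, rpow_add hε, rpow_natCast, rpow_one, rpow_mul hε.le]
    calc _ ≤ ε ^ 3 * (1 + s) ^ (-(9 / 8 : ℝ)) * ε * ((ε ^ κ) ^ ((1 : ℝ) / 2) * 1) := by
          gcongr
      _ = _ := by ring
  unfold errorIntegrand errorMajorant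
  linarith

theorem integrableOn_errorMajorant (hε : 0 < ε) : IntegrableOn (errorMajorant κ δ ε) (Ioi 0) := by
  have I₁ := (integral_Ioi_one_add_mul_rpow (rpow_pos_of_pos hε κ) (p := -(3 / 2)) (by norm_num)).1
  have I₂ := (integral_Ioi_one_add_mul_rpow one_pos (p := -(9 / 8)) (by norm_num)).1
  have I₃ := (integral_Ioi_one_add_mul_rpow one_pos (p := -(9 / 4)) (by norm_num)).1
  simp only [one_mul] at I₂ I₃
  exact ((I₁.const_mul _).add (I₂.const_mul _)).add (I₃.const_mul _)

theorem integral_errorMajorant (hε : 0 < ε) :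
    ∫ s in Ioi 0, errorMajorant κ δ ε s =
      2 * ε ^ (3 - δ + κ / 2) + 8 * ε ^ (4 + κ / 2) + 4 / 5 * ε ^ 7 := by
  have I₁ := integral_Ioi_one_add_mul_rpow (rpow_pos_of_pos hε κ) (p := -(3 / 2)) (by norm_num)
  have I₂ := integral_Ioi_one_add_mul_rpow one_pos (p := -(9 / 8)) (by norm_num)
  have I₃ := integral_Ioi_one_add_mul_rpow one_pos (p := -(9 / 4)) (by norm_num)
  simp only [one_mul] at I₂ I₃
  unfold errorMajorant
  rw [integral_add (f := fun s => _ + _) ((I₁.1.const_mul _).add (I₂.1.const_mul _)) (I₃.1.const_mul _),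
    integral_add (I₁.1.const_mul _) (I₂.1.const_mul _), integral_const_mul, integral_const_mul,
    integral_const_mul, I₁.2, I₂.2, I₃.2,
    show 3 - δ + 3 * κ / 2 = 3 - δ + κ / 2 + κ by ring, rpow_add hε]
  field_simp
  ring

end ErrorIntegral

open ErrorIntegral

theorem integral_error_terms_le_general
    (N : ℕ) (κ : ℝ) (hκ8 : κ ≤ 8)
    (δ : ℝ) (hδ0 : 0 < δ) :
    ∃ C > (0 : ℝ), ∀ ε : ℝ, 0 < ε → ε ≤ 1 →
      ∫ s in Set.Ioi (0 : ℝ),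
          (ε ^ (2 - δ) *
              (ε ^ 2 * (1 + 2 * (N : ℝ) * ε ^ (4 * N) * s) ^
                  (-(1 / (2 * (N : ℝ))))) ^ ((1 : ℝ) / 2) *
              (ε ^ κ * (1 + ε ^ κ * s)⁻¹) ^ ((3 : ℝ) / 2) +
            ε ^ 3 * (1 + s) ^ (-(9 / 8 : ℝ)) *
              (ε ^ 2 * (1 + 2 * (N : ℝ) * ε ^ (4 * N) * s) ^
                  (-(1 / (2 * (N : ℝ))))) ^ ((1 : ℝ) / 2) *
              (ε ^ κ * (1 + ε ^ κ * s)⁻¹) ^ ((1 : ℝ) / 2) +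
            ε ^ 7 * (1 + s) ^ (-(9 / 4 : ℝ))) ≤
        C * ε ^ (3 + κ / 2 - 2 * δ) := by
  refine ⟨54 / 5, by norm_num, fun ε hε hε1 => ?_⟩
  change ∫ s in Ioi 0, errorIntegrand N κ δ ε s ≤ _
  have h_dominated : ∫ s in Ioi 0, errorIntegrand N κ δ ε s ≤ ∫ s in Ioi 0, errorMajorant κ δ ε s :=
    integral_mono_of_nonneg
      (ae_restrict_of_forall_mem measurableSet_Ioi fun s hs => errorIntegrand_nonneg hε.le hs.le)
      (integrableOn_errorMajorant hε)
      (ae_restrict_of_forall_mem measurableSet_Ioi fun s hs =>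
        errorIntegrand_le_errorMajorant hε hs.le)
  have h_pow_le : ∀ x, 3 + κ / 2 - 2 * δ ≤ x → ε ^ x ≤ ε ^ (3 + κ / 2 - 2 * δ) := fun x hx =>
    rpow_le_rpow_of_exponent_ge hε hε1 hx
  have h₁ := h_pow_le (3 - δ + κ / 2) (by linarith)
  have h₂ := h_pow_le (4 + κ / 2) (by linarith)
  have h₃ := h_pow_le 7 (by linarith)
  rw [rpow_ofNat] at h₃
  rw [integral_errorMajorant hε] at h_dominated
  linarith

/-- with `Y(s) = ε²(1+2Nε^{4N}s)^{-1/(2N)}` and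
`W(s) = ε^κ(1+ε^κ s)^{-1}`, the error-term integral
`∫_0^∞ (ε^{2-δ} Y^{1/2} W^{3/2} + ε³ (1+s)^{-9/8} Y^{1/2} W^{1/2} + ε⁷ (1+s)^{-9/4}) ds`
is bounded by `C ε^{3+κ/2-2δ}` uniformly for `ε ∈ (0,1]`. -/
theorem integral_error_terms_le
    (N : ℕ) (hN : 1 ≤ N) (κ : ℝ) (hκ0 : 0 < κ) (hκ8 : κ ≤ 8)
    (δ : ℝ) (hδ0 : 0 < δ) (hδ : δ < 1 / 2) :
    ∃ C > (0 : ℝ), ∀ ε : ℝ, 0 < ε → ε ≤ 1 →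
      ∫ s in Set.Ioi (0 : ℝ),
          (ε ^ (2 - δ) *
              (ε ^ 2 * (1 + 2 * (N : ℝ) * ε ^ (4 * N) * s) ^
                  (-(1 / (2 * (N : ℝ))))) ^ ((1 : ℝ) / 2) *
              (ε ^ κ * (1 + ε ^ κ * s)⁻¹) ^ ((3 : ℝ) / 2) +
            ε ^ 3 * (1 + s) ^ (-(9 / 8 : ℝ)) *
              (ε ^ 2 * (1 + 2 * (N : ℝ) * ε ^ (4 * N) * s) ^
                  (-(1 / (2 * (N : ℝ))))) ^ ((1 : ℝ) / 2) *
              (ε ^ κ * (1 + ε ^ κ * s)⁻¹) ^ ((1 : ℝ) / 2) +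
            ε ^ 7 * (1 + s) ^ (-(9 / 4 : ℝ))) ≤
        C * ε ^ (3 + κ / 2 - 2 * δ) :=
  integral_error_terms_le_general N κ hκ8 δ hδ0
end
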